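/- arXiv:2411.13003 — 2 statements merged into one kernel-verified Lean document; each statement's English description precedes it below -/
import Mathlib

section
/- Suppose s < 0, r·|s| > d_i·q and r·|s| > k_i·p for all i = 1, …, r−1, and m = r−1. Then D(t) is nonzero and span D(t) = (p−1)(q−1) + (Q_1 − Q' − Q_{r−1})·q − (r−1)·rs. -/
open Finset

noncomputable section

namespace TTK

/-- `res p x` is the residue `[x]` of `x` modulo `p`. -/
def res (p : ℕ) (x : ℤ) : ℤ := x % (p : ℤ)

/-- The set `Q = {[n·q⁻¹] : n = 0, …, r−1}`. -/
def Qset (p r : ℕ) (qinv : ℤ) : Finset ℤ :=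
  (Finset.range r).image fun n : ℕ => res p ((n : ℤ) * qinv)

/-- The set `R = {[−n·q⁻¹] : n = 1, …, q}`. -/
def Rset (p q : ℕ) (qinv : ℤ) : Finset ℤ :=
  (Finset.Icc 1 q).image fun n : ℕ => res p (-(n : ℤ) * qinv)

/-- `Qi i` is `Q_i`, the `i`-th smallest element of `Q`. -/
def Qi (p r : ℕ) (qinv : ℤ) (i : ℕ) : ℤ :=
  ((Qset p r qinv).sort (· ≤ ·)).getD i 0

/-- `Q' = [r·q⁻¹]`. -/
def Qp' (p r : ℕ) (qinv : ℤ) : ℤ := res p ((r : ℤ) * qinv)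

/-- `m` is the unique index with `Q_m < Q'` and (`m = r−1` or `Q' < Q_{m+1}`),
i.e. the number of elements of `Q` below `Q'`, minus one. -/
def mIdx (p r : ℕ) (qinv : ℤ) : ℕ :=
  ((Qset p r qinv).filter fun x => x < Qp' p r qinv).card - 1

/-- `k_i = #{l ∈ R : Q_{i−1} ≤ l < Q_i}` for `1 ≤ i ≤ r−1`, and
`k_r = #{l ∈ R : Q_{r−1} ≤ l}`. -/
def ki (p q r : ℕ) (qinv : ℤ) (i : ℕ) : ℕ :=
  if i = r then ((Rset p q qinv).filter fun l => Qi p r qinv (r - 1) ≤ l).card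
  else ((Rset p q qinv).filter fun l => Qi p r qinv (i - 1) ≤ l ∧ l < Qi p r qinv i).card

/-- `k̄_i = k_1 + ⋯ + k_i` (with `k̄_0 = 0`). -/
def kbar (p q r : ℕ) (qinv : ℤ) (i : ℕ) : ℕ := ∑ j ∈ Finset.Icc 1 i, ki p q r qinv j

/-- `k' = #{l ∈ R : Q_m ≤ l < Q'}`. -/
def k' (p q r : ℕ) (qinv : ℤ) : ℕ :=
  ((Rset p q qinv).filter fun l =>
      Qi p r qinv (mIdx p r qinv) ≤ l ∧ l < Qp' p r qinv).card

/-- `k̄' = k̄_m + k'`. -/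
def kbar' (p q r : ℕ) (qinv : ℤ) : ℕ :=
  kbar p q r qinv (mIdx p r qinv) + k' p q r qinv

/-- `d_i = Q_i − Q_{i−1}` for `1 ≤ i ≤ r−1`, and `d_r = p − Q_{r−1}`. -/
def di (p r : ℕ) (qinv : ℤ) (i : ℕ) : ℤ :=
  if i = r then (p : ℤ) - Qi p r qinv (r - 1)
  else Qi p r qinv i - Qi p r qinv (i - 1)

/-- `Q_i` extended by the convention `Q_r = p`. -/
def QiE (p r : ℕ) (qinv : ℤ) (i : ℕ) : ℤ := if i = r then (p : ℤ) else Qi p r qinv i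

/-- `X(t)`. -/
def XX (p q r : ℕ) (qinv s : ℤ) : RatFunc ℚ :=
  1 - (1 - RatFunc.X ^ ((r : ℤ) * s)) *
        ∑ i ∈ Finset.Icc 1 (r - 1),
          RatFunc.X ^ ((kbar p q r qinv i : ℤ) * (p : ℤ) + ((i : ℤ) - 1) * ((r : ℤ) * s))
    - RatFunc.X ^ ((p : ℤ) * (q : ℤ) + ((r : ℤ) - 1) * ((r : ℤ) * s))

/-- `X̃(t)`. -/
def XXt (p q r : ℕ) (qinv s : ℤ) : RatFunc ℚ :=
  1 - (1 - RatFunc.X ^ ((r : ℤ) * s)) *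
        ∑ i ∈ Finset.Icc 1 (mIdx p r qinv),
          RatFunc.X ^ ((kbar p q r qinv i : ℤ) * (p : ℤ) + ((i : ℤ) - 1) * ((r : ℤ) * s))
    - RatFunc.X ^ ((kbar' p q r qinv : ℤ) * (p : ℤ) + (mIdx p r qinv : ℤ) * ((r : ℤ) * s))

/-- `Y(t)`. -/
def YY (p q r : ℕ) (qinv s : ℤ) : RatFunc ℚ :=
  1 - (1 - RatFunc.X ^ ((r : ℤ) * s)) *
        ∑ i ∈ Finset.Icc 1 (r - 1),
          RatFunc.X ^ (Qi p r qinv i * (q : ℤ) + ((i : ℤ) - 1) * ((r : ℤ) * s))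
    - RatFunc.X ^ ((p : ℤ) * (q : ℤ) + ((r : ℤ) - 1) * ((r : ℤ) * s))

/-- `Ỹ(t)`. -/
def YYt (p q r : ℕ) (qinv s : ℤ) : RatFunc ℚ :=
  1 - (1 - RatFunc.X ^ ((r : ℤ) * s)) *
        ∑ i ∈ Finset.Icc 1 (mIdx p r qinv),
          RatFunc.X ^ (Qi p r qinv i * (q : ℤ) + ((i : ℤ) - 1) * ((r : ℤ) * s))
    - RatFunc.X ^ (Qp' p r qinv * (q : ℤ) + (mIdx p r qinv : ℤ) * ((r : ℤ) * s))

def a11 (p q r : ℕ) (qinv s : ℤ) : RatFunc ℚ :=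
  XXt p q r qinv s / (1 - RatFunc.X ^ (p : ℤ))

def a12 (p q r : ℕ) (qinv s : ℤ) : RatFunc ℚ :=
  ((1 - RatFunc.X ^ ((r : ℤ) * s)) / (1 - RatFunc.X ^ (r : ℤ))) *
      ∑ i ∈ Finset.Icc 1 (mIdx p r qinv),
        RatFunc.X ^ ((kbar p q r qinv i : ℤ) * (p : ℤ) + ((i : ℤ) - 1) * ((r : ℤ) * s))
    + RatFunc.X ^ ((kbar' p q r qinv : ℤ) * (p : ℤ) + (mIdx p r qinv : ℤ) * ((r : ℤ) * s))

def a13 (p q r : ℕ) (qinv s : ℤ) : RatFunc ℚ :=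
  RatFunc.X ^ (q : ℤ) * YYt p q r qinv s / (1 - RatFunc.X ^ (q : ℤ))

def a14 (p q r : ℕ) (qinv s : ℤ) : RatFunc ℚ :=
  RatFunc.X ^ ((r : ℤ) * s) *
    ∑ i ∈ Finset.Icc 1 (mIdx p r qinv),
      RatFunc.X ^ (Qi p r qinv i * (q : ℤ) + ((i : ℤ) - 1) * ((r : ℤ) * s))

def a22 (r : ℕ) (s : ℤ) : RatFunc ℚ :=
  (1 - RatFunc.X ^ ((r : ℤ) * s)) / (1 - RatFunc.X ^ (r : ℤ))

def a24 (r : ℕ) (s : ℤ) : RatFunc ℚ := RatFunc.X ^ ((r : ℤ) * s)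

def a31 (p q r : ℕ) (qinv s : ℤ) : RatFunc ℚ :=
  XX p q r qinv s / (1 - RatFunc.X ^ (p : ℤ))

def a32 (p q r : ℕ) (qinv s : ℤ) : RatFunc ℚ :=
  ((1 - RatFunc.X ^ ((r : ℤ) * s)) / (1 - RatFunc.X ^ (r : ℤ))) *
    ∑ i ∈ Finset.Icc 1 r,
      RatFunc.X ^ ((kbar p q r qinv i : ℤ) * (p : ℤ) + ((i : ℤ) - 1) * ((r : ℤ) * s))

def a33 (p q r : ℕ) (qinv s : ℤ) : RatFunc ℚ :=
  RatFunc.X ^ (q : ℤ) * YY p q r qinv s / (1 - RatFunc.X ^ (q : ℤ))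

def a34 (p q r : ℕ) (qinv s : ℤ) : RatFunc ℚ :=
  ∑ i ∈ Finset.Icc 1 r,
    RatFunc.X ^ (QiE p r qinv i * (q : ℤ) + (i : ℤ) * ((r : ℤ) * s))

/-- The minor `m₁`. -/
def minor1 (p q r : ℕ) (qinv s : ℤ) : RatFunc ℚ :=
  a13 p q r qinv s * (a22 r s * a34 p q r qinv s - a24 r s * a32 p q r qinv s) +
    a33 p q r qinv s * (a12 p q r qinv s * a24 r s - a14 p q r qinv s * a22 r s)

/-- The minor `m₂`. -/
def minor2 (p q r : ℕ) (qinv s : ℤ) : RatFunc ℚ :=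
  a24 r s * (a11 p q r qinv s * a33 p q r qinv s - a13 p q r qinv s * a31 p q r qinv s)

/-- The minor `m₃`. -/
def minor3 (p q r : ℕ) (qinv s : ℤ) : RatFunc ℚ :=
  a22 r s * (a11 p q r qinv s * a34 p q r qinv s - a14 p q r qinv s * a31 p q r qinv s) -
    a24 r s * (a11 p q r qinv s * a32 p q r qinv s - a12 p q r qinv s * a31 p q r qinv s)

/-- `ord₀ f`, the order of vanishing of `f` at `t = 0`. -/
def ord0 (f : RatFunc ℚ) : ℤ :=
  (f.num.rootMultiplicity 0 : ℤ) - (f.denom.rootMultiplicity 0 : ℤ)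

/-- `span f = deg f − ord₀ f`. -/
def spanDeg (f : RatFunc ℚ) : ℤ := f.intDegree - ord0 f

/-- `D(t)`, the paper's formula for the Alexander polynomial of `T(p,q;r,s)`. -/
def DD (p q r : ℕ) (qinv s : ℤ) : RatFunc ℚ :=
  (1 - RatFunc.X) *
      (XXt p q r qinv s * YY p q r qinv s - XX p q r qinv s * YYt p q r qinv s) /
    ((1 - RatFunc.X ^ (p : ℤ)) * (1 - RatFunc.X ^ (q : ℤ)) * (1 - RatFunc.X ^ (r : ℤ)))

lemma ord0_mul {f g : RatFunc ℚ} (hf : f ≠ 0) (hg : g ≠ 0) :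
    ord0 (f * g) = ord0 f + ord0 g := by
  have hfg : f * g ≠ 0 := mul_ne_zero hf hg
  have h := RatFunc.num_denom_mul f g
  have h2 := congrArg (Polynomial.rootMultiplicity 0) h
  rw [Polynomial.rootMultiplicity_mul (by
        exact mul_ne_zero (RatFunc.num_ne_zero hfg)
          (mul_ne_zero (f.denom_ne_zero) (g.denom_ne_zero))),
      Polynomial.rootMultiplicity_mul (mul_ne_zero (f.denom_ne_zero) (g.denom_ne_zero)),
      Polynomial.rootMultiplicity_mul (by
        exact mul_ne_zero (mul_ne_zero (RatFunc.num_ne_zero hf) (RatFunc.num_ne_zero hg))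
          ((f*g).denom_ne_zero)),
      Polynomial.rootMultiplicity_mul (mul_ne_zero (RatFunc.num_ne_zero hf) (RatFunc.num_ne_zero hg))] at h2
  unfold ord0; omega

lemma spanDeg_mul {f g : RatFunc ℚ} (hf : f ≠ 0) (hg : g ≠ 0) :
    spanDeg (f * g) = spanDeg f + spanDeg g := by
  unfold spanDeg
  rw [RatFunc.intDegree_mul hf hg, ord0_mul hf hg]; ring

lemma ord0_one : ord0 (1 : RatFunc ℚ) = 0 := by
  unfold ord0
  rw [RatFunc.num_one, RatFunc.denom_one]
  ring

lemma spanDeg_one : spanDeg (1 : RatFunc ℚ) = 0 := by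
  unfold spanDeg
  rw [RatFunc.intDegree_one, ord0_one]
  ring

lemma spanDeg_inv {f : RatFunc ℚ} (hf : f ≠ 0) : spanDeg f⁻¹ = -spanDeg f := by
  have h := spanDeg_mul hf (inv_ne_zero hf)
  rw [mul_inv_cancel₀ hf, spanDeg_one] at h
  omega

lemma spanDeg_algebraMap (P : Polynomial ℚ) (h0 : P.coeff 0 ≠ 0) :
    spanDeg (algebraMap (Polynomial ℚ) (RatFunc ℚ) P) = P.natDegree := by
  unfold spanDeg ord0
  rw [RatFunc.intDegree_polynomial, RatFunc.num_algebraMap, RatFunc.denom_algebraMap]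
  rw [Polynomial.rootMultiplicity_eq_zero (by
        simp only [Polynomial.IsRoot, ← Polynomial.coeff_zero_eq_eval_zero]
        exact h0),
      Polynomial.rootMultiplicity_eq_zero (by simp [Polynomial.IsRoot])]
  simp

lemma X_zpow_ne_zero (n : ℤ) : (RatFunc.X : RatFunc ℚ) ^ n ≠ 0 :=
  zpow_ne_zero n RatFunc.X_ne_zero

lemma spanDeg_X_pow (n : ℕ) : spanDeg ((RatFunc.X : RatFunc ℚ) ^ (n:ℤ)) = 0 := by
  unfold spanDeg ord0
  rw [zpow_natCast, ← RatFunc.algebraMap_X, ← map_pow]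
  rw [RatFunc.intDegree_polynomial, RatFunc.num_algebraMap, RatFunc.denom_algebraMap]
  have : Polynomial.rootMultiplicity 0 ((Polynomial.X : Polynomial ℚ) ^ n) = n := by
    simpa using Polynomial.rootMultiplicity_X_sub_C_pow (0 : ℚ) n
  rw [this]
  rw [Polynomial.rootMultiplicity_eq_zero (by simp [Polynomial.IsRoot])]
  simp

lemma spanDeg_X_zpow (n : ℤ) : spanDeg ((RatFunc.X : RatFunc ℚ) ^ n) = 0 := by
  rcases le_or_gt 0 n with h | h
  · rw [← Int.toNat_of_nonneg h]; exact spanDeg_X_pow n.toNat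
  · have : (RatFunc.X : RatFunc ℚ) ^ n = ((RatFunc.X : RatFunc ℚ) ^ ((-n).toNat : ℤ))⁻¹ := by
      rw [← zpow_neg, Int.toNat_of_nonneg (by omega), neg_neg]
    rw [this, spanDeg_inv (X_zpow_ne_zero _), spanDeg_X_pow, neg_zero]

section Comb
variable {p q r : ℕ} {qinv : ℤ}

lemma res_nonneg (hp : 0 < p) (x : ℤ) : 0 ≤ res p x :=
  Int.emod_nonneg x (by exact_mod_cast hp.ne')

lemma res_lt_p (hp : 0 < p) (x : ℤ) : res p x < p :=
  Int.emod_lt_of_pos x (by exact_mod_cast hp)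

lemma res_modEq (x : ℤ) : res p x ≡ x [ZMOD (p:ℤ)] := Int.emod_emod_of_dvd x dvd_rfl

lemma res_eq_of {x y : ℤ} (h : y ≡ x [ZMOD (p:ℤ)]) (h0 : 0 ≤ y) (h1 : y < (p:ℤ)) :
    res p x = y := by
  have h' : y % (p:ℤ) = x % (p:ℤ) := h
  have h2 : y % (p:ℤ) = y := Int.emod_eq_of_lt h0 h1
  unfold res
  omega

lemma cancel_qinv (hp1 : 1 < (p:ℤ)) (hqinv : ((q:ℤ) * qinv) % (p:ℤ) = 1) {a b : ℤ}
    (h : a * qinv ≡ b * qinv [ZMOD (p:ℤ)]) : a ≡ b [ZMOD (p:ℤ)] := by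
  have hq1 : (q:ℤ) * qinv ≡ 1 [ZMOD (p:ℤ)] := by
    have : (1:ℤ) % (p:ℤ) = 1 := Int.emod_eq_of_lt (by norm_num) hp1
    unfold Int.ModEq
    omega
  have h2 : a * qinv * q ≡ b * qinv * q [ZMOD (p:ℤ)] := h.mul_right _
  have e1 : a * ((q:ℤ) * qinv) = a * qinv * q := by ring
  have e2 : b * ((q:ℤ) * qinv) = b * qinv * q := by ring
  calc a = a * 1 := by ring
    _ ≡ a * ((q:ℤ) * qinv) [ZMOD (p:ℤ)] := (Int.ModEq.mul_left a hq1).symm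
    _ = a * qinv * q := e1
    _ ≡ b * qinv * q [ZMOD (p:ℤ)] := h2
    _ = b * ((q:ℤ) * qinv) := e2.symm
    _ ≡ b * 1 [ZMOD (p:ℤ)] := Int.ModEq.mul_left b hq1
    _ = b := by ring

lemma Qset_card (hrp : r < p) (hp1 : 1 < (p:ℤ)) (hqinv : ((q:ℤ) * qinv) % (p:ℤ) = 1) :
    (Qset p r qinv).card = r := by
  rw [Qset, Finset.card_image_of_injOn, Finset.card_range]
  intro a ha b hb hab
  simp only [Finset.coe_range, Set.mem_Iio] at ha hb
  have h : (a:ℤ) * qinv ≡ (b:ℤ) * qinv [ZMOD (p:ℤ)] := by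
    have h1 := res_modEq (p := p) ((a:ℤ) * qinv)
    have h2 := res_modEq (p := p) ((b:ℤ) * qinv)
    simp only at hab
    exact (h1.symm.trans (by rw [hab])).trans h2
  have h3 : (a:ℤ) ≡ (b:ℤ) [ZMOD (p:ℤ)] := cancel_qinv hp1 hqinv h
  have h4 : (a:ℤ) % p = (b:ℤ) % p := h3
  have ha' : (a:ℤ) % p = a := Int.emod_eq_of_lt (by positivity) (by exact_mod_cast lt_trans ha hrp)
  have hb' : (b:ℤ) % p = b := Int.emod_eq_of_lt (by positivity) (by exact_mod_cast lt_trans hb hrp)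
  exact_mod_cast ha' ▸ hb' ▸ h4

lemma Qi_getElem (hrp : r < p) (hp1 : 1 < (p:ℤ)) (hqinv : ((q:ℤ) * qinv) % (p:ℤ) = 1)
    {i : ℕ} (hi : i < r) :
    ∃ h : i < ((Qset p r qinv).sort (· ≤ ·)).length,
      Qi p r qinv i = ((Qset p r qinv).sort (· ≤ ·))[i] := by
  have hlen : ((Qset p r qinv).sort (· ≤ ·)).length = r := by
    rw [Finset.length_sort, Qset_card hrp hp1 hqinv]
  refine ⟨by omega, ?_⟩
  rw [Qi, List.getD_eq_getElem?_getD, List.getElem?_eq_getElem (by omega)]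
  rfl

lemma Qi_mem (hrp : r < p) (hp1 : 1 < (p:ℤ)) (hqinv : ((q:ℤ) * qinv) % (p:ℤ) = 1)
    {i : ℕ} (hi : i < r) : Qi p r qinv i ∈ Qset p r qinv := by
  obtain ⟨h, he⟩ := Qi_getElem hrp hp1 hqinv hi (q := q)
  rw [he, ← Finset.mem_sort (· ≤ ·)]
  exact List.getElem_mem h

lemma Qi_strictMono (hrp : r < p) (hp1 : 1 < (p:ℤ)) (hqinv : ((q:ℤ) * qinv) % (p:ℤ) = 1)
    {i j : ℕ} (hij : i < j) (hj : j < r) : Qi p r qinv i < Qi p r qinv j := by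
  obtain ⟨hi', hei⟩ := Qi_getElem hrp hp1 hqinv (lt_trans hij hj) (q := q)
  obtain ⟨hj', hej⟩ := Qi_getElem hrp hp1 hqinv hj (q := q)
  rw [hei, hej]
  have hs : List.Pairwise (· < ·) ((Qset p r qinv).sort (· ≤ ·)) :=
    List.sortedLT_iff_pairwise.mp (Finset.sortedLT_sort _)
  exact List.pairwise_iff_getElem.mp hs i j hi' hj' hij

lemma Qi_surj (hrp : r < p) (hp1 : 1 < (p:ℤ)) (hqinv : ((q:ℤ) * qinv) % (p:ℤ) = 1)
    {x : ℤ} (hx : x ∈ Qset p r qinv) : ∃ i, i < r ∧ Qi p r qinv i = x := by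
  rw [← Finset.mem_sort (· ≤ ·), List.mem_iff_getElem] at hx
  obtain ⟨i, hi, he⟩ := hx
  have hlen : ((Qset p r qinv).sort (· ≤ ·)).length = r := by
    rw [Finset.length_sort, Qset_card hrp hp1 hqinv]
  refine ⟨i, by omega, ?_⟩
  obtain ⟨h', he'⟩ := Qi_getElem hrp hp1 hqinv (i := i) (by omega) (q := q)
  rw [he', he]

lemma Qi_zero (hp : 0 < p) (hr : 0 < r) (hrp : r < p) (hp1 : 1 < (p:ℤ))
    (hqinv : ((q:ℤ) * qinv) % (p:ℤ) = 1) : Qi p r qinv 0 = 0 := by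
  have h0 : (0:ℤ) ∈ Qset p r qinv := by
    rw [Qset, Finset.mem_image]
    exact ⟨0, Finset.mem_range.mpr hr, by simp [res]⟩
  obtain ⟨j, hj, hje⟩ := Qi_surj hrp hp1 hqinv h0
  have h1 : Qi p r qinv 0 ≤ Qi p r qinv j := by
    rcases Nat.eq_zero_or_pos j with h | h
    · rw [h]
    · exact le_of_lt (Qi_strictMono hrp hp1 hqinv h hj)
  have h2 : 0 ≤ Qi p r qinv 0 := by
    have := Qi_mem hrp hp1 hqinv (show 0 < r from hr) (q := q)
    rw [Qset, Finset.mem_image] at this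
    obtain ⟨n, _, hn⟩ := this
    rw [← hn]
    exact res_nonneg hp _
  omega


lemma qinv_modeq (hp1 : 1 < (p:ℤ)) (hqinv : ((q:ℤ) * qinv) % (p:ℤ) = 1) :
    (q:ℤ) * qinv ≡ 1 [ZMOD (p:ℤ)] := by
  have : (1:ℤ) % (p:ℤ) = 1 := Int.emod_eq_of_lt (by norm_num) hp1
  unfold Int.ModEq
  omega

lemma Rset_nonneg (hp : 0 < p) {l : ℤ} (hl : l ∈ Rset p q qinv) : 0 ≤ l := by
  rw [Rset, Finset.mem_image] at hl
  obtain ⟨n, _, hn⟩ := hl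
  rw [← hn]; exact res_nonneg hp _

lemma Rset_lt (hp : 0 < p) {l : ℤ} (hl : l ∈ Rset p q qinv) : l < p := by
  rw [Rset, Finset.mem_image] at hl
  obtain ⟨n, _, hn⟩ := hl
  rw [← hn]; exact res_lt_p hp _

lemma Rset_mem_iff (hp1 : 1 < (p:ℤ)) (hq0 : 0 < q) (hqp : q < p)
    (hqinv : ((q:ℤ) * qinv) % (p:ℤ) = 1) {l : ℤ} (h0 : 0 ≤ l) (hl : l < (p:ℤ)) :
    l ∈ Rset p q qinv ↔ (p:ℤ) - q ≤ (l * q) % (p:ℤ) := by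
  have hq1 := qinv_modeq hp1 hqinv
  constructor
  · intro hmem
    rw [Rset, Finset.mem_image] at hmem
    obtain ⟨n, hn, he⟩ := hmem
    rw [Finset.mem_Icc] at hn
    have h1 : l ≡ -(n:ℤ) * qinv [ZMOD (p:ℤ)] := he ▸ res_modEq _
    have h2 : l * q ≡ -(n:ℤ) * qinv * q [ZMOD (p:ℤ)] := h1.mul_right _
    have h3 : -(n:ℤ) * qinv * q = (-(n:ℤ)) * ((q:ℤ) * qinv) := by ring
    have h4 : (-(n:ℤ)) * ((q:ℤ) * qinv) ≡ (-(n:ℤ)) * 1 [ZMOD (p:ℤ)] :=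
      Int.ModEq.mul_left _ hq1
    have h5 : ((p:ℤ) - n) ≡ -(n:ℤ) [ZMOD (p:ℤ)] := by
      rw [Int.modEq_iff_dvd]
      exact ⟨-1, by ring⟩
    have h6 : ((p:ℤ) - n) ≡ l * q [ZMOD (p:ℤ)] := by
      calc ((p:ℤ) - n) ≡ -(n:ℤ) [ZMOD (p:ℤ)] := h5
        _ = (-(n:ℤ)) * 1 := by ring
        _ ≡ (-(n:ℤ)) * ((q:ℤ) * qinv) [ZMOD (p:ℤ)] := h4.symm
        _ = -(n:ℤ) * qinv * q := h3.symm
        _ ≡ l * q [ZMOD (p:ℤ)] := h2.symm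
    have h7 : res p (l * q) = (p:ℤ) - n :=
      res_eq_of h6 (by
        have : (n:ℤ) ≤ (q:ℤ) := by exact_mod_cast hn.2
        have : (q:ℤ) < (p:ℤ) := by exact_mod_cast hqp
        omega) (by
        have : (1:ℤ) ≤ (n:ℤ) := by exact_mod_cast hn.1
        omega)
    have : (n:ℤ) ≤ (q:ℤ) := by exact_mod_cast hn.2
    unfold res at h7
    omega
  · intro hge
    set n : ℤ := (p:ℤ) - (l * q) % (p:ℤ) with hn
    have hmod0 : 0 ≤ (l * q) % (p:ℤ) := Int.emod_nonneg _ (by omega)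
    have hmodp : (l * q) % (p:ℤ) < (p:ℤ) := Int.emod_lt_of_pos _ (by omega)
    have hn1 : 1 ≤ n := by omega
    have hnq : n ≤ (q:ℤ) := by omega
    rw [Rset, Finset.mem_image]
    refine ⟨n.toNat, Finset.mem_Icc.mpr ⟨by omega, by omega⟩, ?_⟩
    have hcast : ((n.toNat : ℤ)) = n := Int.toNat_of_nonneg (by omega)
    rw [hcast]
    apply res_eq_of _ h0 hl
    -- l ≡ -n * qinv [ZMOD p]
    have h1 : l * q ≡ -n [ZMOD (p:ℤ)] := by
      have : (l*q) % (p:ℤ) ≡ l * q [ZMOD (p:ℤ)] := Int.emod_emod_of_dvd _ dvd_rfl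
      have h5 : -n ≡ (l*q) % (p:ℤ) [ZMOD (p:ℤ)] := by
        rw [Int.modEq_iff_dvd]
        exact ⟨1, by omega⟩
      exact (h5.trans this).symm
    have h2 : l * q * qinv ≡ -n * qinv [ZMOD (p:ℤ)] := h1.mul_right _
    calc l = l * 1 := by ring
      _ ≡ l * ((q:ℤ) * qinv) [ZMOD (p:ℤ)] := (Int.ModEq.mul_left _ hq1).symm
      _ = l * q * qinv := by ring
      _ ≡ -n * qinv [ZMOD (p:ℤ)] := h2

lemma ediv_step (hp0 : 0 < (p:ℤ)) (hqp : (q:ℤ) < (p:ℤ)) (a : ℤ) :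
    (a + q) / (p:ℤ) = a / (p:ℤ) + (if (p:ℤ) - q ≤ a % (p:ℤ) then 1 else 0) := by
  have hmod0 : 0 ≤ a % (p:ℤ) := Int.emod_nonneg _ (by omega)
  have hmodp : a % (p:ℤ) < (p:ℤ) := Int.emod_lt_of_pos _ hp0
  have hdecomp : a = a % (p:ℤ) + (p:ℤ) * (a / (p:ℤ)) := (Int.emod_add_mul_ediv a p).symm
  have key : (a + q) / (p:ℤ) = (a % (p:ℤ) + q) / (p:ℤ) + a / (p:ℤ) := by
    conv_lhs => rw [hdecomp]
    rw [show a % (p:ℤ) + (p:ℤ) * (a / (p:ℤ)) + q = a % (p:ℤ) + q + (p:ℤ) * (a / (p:ℤ)) by ring]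
    exact Int.add_mul_ediv_left _ _ (by omega)
  rw [key]
  by_cases hc : (p:ℤ) - q ≤ a % (p:ℤ)
  · rw [if_pos hc]
    have h1 : (a % (p:ℤ) + q) / (p:ℤ) = 1 := by
      have e : a % (p:ℤ) + q = (a % (p:ℤ) + q - p) + (p:ℤ) * 1 := by ring
      rw [e, Int.add_mul_ediv_left _ _ (by omega : (p:ℤ) ≠ 0),
        Int.ediv_eq_zero_of_lt (by omega) (by omega)]
      norm_num
    omega
  · rw [if_neg hc]
    have hq0 : (0:ℤ) ≤ q := by positivity
    rw [Int.ediv_eq_zero_of_lt (by omega) (by omega)]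
    omega

lemma Rcount (hp1 : 1 < (p:ℤ)) (hq0 : 0 < q) (hqp : q < p)
    (hqinv : ((q:ℤ) * qinv) % (p:ℤ) = 1) :
    ∀ t : ℕ, t ≤ p → ((Rset p q qinv).filter (fun l => l < (t:ℤ))).card
      = ((t:ℤ) * q) / (p:ℤ) := by
  have hp0 : 0 < p := by exact_mod_cast lt_trans one_pos hp1
  intro t
  induction t with
  | zero =>
    intro _
    rw [Finset.filter_false_of_mem, Finset.card_empty]
    · simp
    · intro l hl
      have := Rset_nonneg hp0 hl
      push_cast
      omega
  | succ t ih =>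
    intro ht
    have ht' : t ≤ p := by omega
    have htp : (t:ℤ) < (p:ℤ) := by exact_mod_cast by omega
    have hsplit : (Rset p q qinv).filter (fun l => l < ((t+1:ℕ):ℤ))
        = (Rset p q qinv).filter (fun l => l < (t:ℤ))
          ∪ (Rset p q qinv).filter (fun l => l = (t:ℤ)) := by
      ext a
      simp only [Finset.mem_filter, Finset.mem_union]
      constructor
      · rintro ⟨ha, hlt⟩
        push_cast at hlt
        rcases lt_or_eq_of_le (by omega : a ≤ (t:ℤ)) with h | h
        · exact Or.inl ⟨ha, h⟩
        · exact Or.inr ⟨ha, h⟩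
      · rintro (⟨ha, h⟩ | ⟨ha, h⟩) <;> (push_cast; constructor) <;> first | exact ha | omega
    have hdisj : Disjoint ((Rset p q qinv).filter (fun l => l < (t:ℤ)))
        ((Rset p q qinv).filter (fun l => l = (t:ℤ))) := by
      rw [Finset.disjoint_left]
      intro a ha hb
      rw [Finset.mem_filter] at ha hb
      omega
    have heq : (Rset p q qinv).filter (fun l => l = (t:ℤ))
        = if (t:ℤ) ∈ Rset p q qinv then {(t:ℤ)} else ∅ := Finset.filter_eq' _ _
    have hstep := ediv_step (p := p) (q := q) (by omega) (by exact_mod_cast hqp) ((t:ℤ) * q)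
    have hmem := Rset_mem_iff (p := p) (q := q) (qinv := qinv) hp1 hq0 hqp hqinv
      (l := (t:ℤ)) (by positivity) htp
    have hcard : ((Rset p q qinv).filter (fun l => l = (t:ℤ))).card
        = if (t:ℤ) ∈ Rset p q qinv then 1 else 0 := by
      rw [heq]; split <;> simp
    rw [hsplit, Finset.card_union_of_disjoint hdisj, Nat.cast_add, ih ht', hcard]
    push_cast
    rw [add_mul, one_mul, hstep]
    by_cases hc : (t:ℤ) ∈ Rset p q qinv
    · rw [if_pos hc, if_pos (hmem.mp hc)]
    · rw [if_neg hc, if_neg (fun h => hc (hmem.mpr h))]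

lemma filter_lt_split (s : Finset ℤ) {a b : ℤ} (hab : a ≤ b) :
    (s.filter (fun l => l < b)).card
      = (s.filter (fun l => l < a)).card + (s.filter (fun l => a ≤ l ∧ l < b)).card := by
  have hsplit : s.filter (fun l => l < b)
      = s.filter (fun l => l < a) ∪ s.filter (fun l => a ≤ l ∧ l < b) := by
    ext x
    simp only [Finset.mem_filter, Finset.mem_union]
    constructor
    · rintro ⟨hx, h⟩
      rcases lt_or_ge x a with h' | h'
      · exact Or.inl ⟨hx, h'⟩
      · exact Or.inr ⟨hx, h', h⟩
    · rintro (⟨hx, h⟩ | ⟨hx, h1, h2⟩) <;> exact ⟨hx, by omega⟩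
  have hdisj : Disjoint (s.filter (fun l => l < a)) (s.filter (fun l => a ≤ l ∧ l < b)) := by
    rw [Finset.disjoint_left]
    intro x hx hy
    rw [Finset.mem_filter] at hx hy
    omega
  rw [hsplit, Finset.card_union_of_disjoint hdisj]

end Comb


open Finset Polynomial
/-- generic factor `1 - (1-t^e)·Σ t^{K i + (i-1)e} - t^{A + (r-1)e}` -/
def GF (r : ℕ) (K : ℕ → ℤ) (A e : ℤ) : RatFunc ℚ :=
  1 - (1 - RatFunc.X ^ e) * ∑ i ∈ Finset.Icc 1 (r - 1), RatFunc.X ^ (K i + ((i : ℤ) - 1) * e)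
    - RatFunc.X ^ (A + ((r : ℤ) - 1) * e)

def EE (bot t : ℤ) : Polynomial ℚ := Polynomial.X ^ ((t - bot).toNat)

def famP (r : ℕ) (K G : ℕ → ℤ) (A B PQ e bot : ℤ) (i : ℕ) : Polynomial ℚ :=
  -EE bot (K i + B + ((i:ℤ) + (r:ℤ) - 2) * e) + EE bot (K i + PQ + ((i:ℤ) + (r:ℤ) - 2) * e)
  + EE bot (K i + B + ((i:ℤ) + (r:ℤ) - 1) * e) - EE bot (K i + PQ + ((i:ℤ) + (r:ℤ) - 1) * e)
  + EE bot (G i + A + ((i:ℤ) + (r:ℤ) - 2) * e) - EE bot (G i + PQ + ((i:ℤ) + (r:ℤ) - 2) * e)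
  - EE bot (G i + A + ((i:ℤ) + (r:ℤ) - 1) * e) + EE bot (G i + PQ + ((i:ℤ) + (r:ℤ) - 1) * e)

def bareP (r : ℕ) (A B PQ e bot : ℤ) : Polynomial ℚ :=
  EE bot (B + ((r:ℤ) - 1) * e) - EE bot (A + ((r:ℤ) - 1) * e)
  + EE bot (PQ + A + (2*(r:ℤ) - 2) * e) - EE bot (PQ + B + (2*(r:ℤ) - 2) * e)

def PP (r : ℕ) (K G : ℕ → ℤ) (A B PQ e bot : ℤ) : Polynomial ℚ :=
  bareP r A B PQ e bot + ∑ i ∈ Finset.Icc 1 (r - 1), famP r K G A B PQ e bot i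

lemma coeff_EE_ne {bot E t : ℤ} (hne : E ≠ t) (hE : bot ≤ E) (ht : bot ≤ t) :
    (EE bot E).coeff ((t - bot).toNat) = 0 := by
  rw [EE, Polynomial.coeff_X_pow, if_neg (by omega)]

lemma coeff_EE_eq {bot E t : ℤ} (heq : E = t) (hE : bot ≤ E) :
    (EE bot E).coeff ((t - bot).toNat) = 1 := by
  rw [EE, Polynomial.coeff_X_pow, if_pos (by omega)]

lemma natDegree_EE_le {bot E t : ℤ} (h : E ≤ t) : (EE bot E).natDegree ≤ (t - bot).toNat := by
  rw [EE, Polynomial.natDegree_X_pow]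
  omega

lemma ndadd {p q : Polynomial ℚ} {n : ℕ} (hp : p.natDegree ≤ n) (hq : q.natDegree ≤ n) :
    (p + q).natDegree ≤ n := le_trans (Polynomial.natDegree_add_le p q) (max_le hp hq)

lemma ndsub {p q : Polynomial ℚ} {n : ℕ} (hp : p.natDegree ≤ n) (hq : q.natDegree ≤ n) :
    (p - q).natDegree ≤ n := le_trans (Polynomial.natDegree_sub_le p q) (max_le hp hq)

lemma ndneg {p : Polynomial ℚ} {n : ℕ} (hp : p.natDegree ≤ n) : (-p).natDegree ≤ n := by
  rwa [Polynomial.natDegree_neg]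

lemma expand4 (u t bb cc : ℤ) :
    (1 - (RatFunc.X : RatFunc ℚ)^u) * (RatFunc.X^t * (RatFunc.X^bb - RatFunc.X^cc))
    = RatFunc.X^(t+bb) - RatFunc.X^(t+cc) - RatFunc.X^(t+u+bb) + RatFunc.X^(t+u+cc) := by
  rw [zpow_add₀ RatFunc.X_ne_zero t bb, zpow_add₀ RatFunc.X_ne_zero t cc,
    zpow_add₀ RatFunc.X_ne_zero (t+u) bb, zpow_add₀ RatFunc.X_ne_zero (t+u) cc,
    zpow_add₀ RatFunc.X_ne_zero t u]
  ring

lemma shiftE {bot E : ℤ} (h : bot ≤ E) :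
    (RatFunc.X : RatFunc ℚ)^bot * algebraMap (Polynomial ℚ) (RatFunc ℚ) (EE bot E)
      = RatFunc.X ^ E := by
  rw [EE, map_pow, RatFunc.algebraMap_X, ← zpow_natCast, ← zpow_add₀ RatFunc.X_ne_zero,
    Int.toNat_of_nonneg (by omega : (0:ℤ) ≤ E - bot)]
  congr 1
  omega

section Bounds
variable (r : ℕ) (K G : ℕ → ℤ) (A B PQ e : ℤ)

/-- All the arithmetic facts needed, bundled. -/
structure Facts : Prop where
  hr : 2 ≤ r
  he : e < 0
  hG0 : G 0 = 0
  hK0 : K 0 = 0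
  hK1 : 0 ≤ K 1
  hstep : ∀ i, 1 ≤ i → i ≤ r - 1 →
    G i - G (i-1) ≤ -e - 1 ∧ K i - K (i-1) ≤ -e - 1 ∧ G (i-1) ≤ G i ∧ K (i-1) ≤ K i
  hn : ∀ i, 1 ≤ i → i ≤ r - 1 → K i + 1 ≤ G i ∧ G i ≤ K i + ((r:ℤ) - 1)
  hB : B = A + r
  hBP : B < PQ
  hGP : G (r-1) < PQ
  hk1 : K (r-1) ≤ A
  hk2 : A - K (r-1) ≤ G 1 - 1
  hk3 : A - K (r-1) < PQ - G (r-1)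

variable {r K G A B PQ e}

lemma Facts.hsum (F : Facts r K G A B PQ e) : ∀ a b : ℕ, a ≤ b → b ≤ r - 1 →
    G b - G a ≤ ((b:ℤ)-(a:ℤ))*(-e-1) ∧ K b - K a ≤ ((b:ℤ)-(a:ℤ))*(-e-1)
    ∧ G a ≤ G b ∧ K a ≤ K b := by
  intro a b hab hbr
  induction b with
  | zero =>
    have : a = 0 := by omega
    subst this
    norm_num
  | succ m ih =>
    rcases Nat.eq_or_lt_of_le hab with heq | hlt
    · subst heq
      norm_num
    · have ham : a ≤ m := by omega
      have hmr : m ≤ r - 1 := by omega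
      obtain ⟨h1, h2, h3, h4⟩ := ih ham hmr
      obtain ⟨s1, s2, s3, s4⟩ := F.hstep (m+1) (by omega) (by omega)
      simp only [Nat.add_sub_cancel] at s1 s2 s3 s4
      have hexp : (((m+1:ℕ):ℤ) - (a:ℤ))*(-e-1) = ((m:ℤ) - (a:ℤ))*(-e-1) + (-e-1) := by
        push_cast; ring
      refine ⟨by omega, by omega, by omega, by omega⟩


/-- preamble pool of facts -/
lemma Facts.pool (F : Facts r K G A B PQ e) :
    1 ≤ G 1 ∧ G 1 ≤ -e - 1 ∧ (2:ℤ) ≤ (r:ℤ) := by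
  obtain ⟨n1L, n1R⟩ := F.hn 1 (by omega) (by
    have := F.hr; omega)
  have hst1 := (F.hstep 1 le_rfl (by have := F.hr; omega)).1
  rw [show (1-1 : ℕ) = 0 from rfl, F.hG0] at hst1
  have hr' : (2:ℤ) ≤ (r:ℤ) := by exact_mod_cast F.hr
  exact ⟨by linarith [F.hK1], by linarith, hr'⟩

set_option maxHeartbeats 1000000 in
lemma Facts.fam_bnds (F : Facts r K G A B PQ e) : ∀ i, 1 ≤ i → i ≤ r - 1 →
    (A + G (r-1) + (2*(r:ℤ)-2)*e < K i + B + ((i:ℤ) + (r:ℤ) - 2) * e ∧ K i + B + ((i:ℤ) + (r:ℤ) - 2) * e < PQ + G 1 + ((r:ℤ)-1)*e) ∧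
    (A + G (r-1) + (2*(r:ℤ)-2)*e < K i + PQ + ((i:ℤ) + (r:ℤ) - 2) * e ∧ K i + PQ + ((i:ℤ) + (r:ℤ) - 2) * e < PQ + G 1 + ((r:ℤ)-1)*e) ∧
    (A + G (r-1) + (2*(r:ℤ)-2)*e < K i + B + ((i:ℤ) + (r:ℤ) - 1) * e ∧ K i + B + ((i:ℤ) + (r:ℤ) - 1) * e < PQ + G 1 + ((r:ℤ)-1)*e) ∧
    (A + G (r-1) + (2*(r:ℤ)-2)*e < K i + PQ + ((i:ℤ) + (r:ℤ) - 1) * e ∧ K i + PQ + ((i:ℤ) + (r:ℤ) - 1) * e < PQ + G 1 + ((r:ℤ)-1)*e) ∧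
    (A + G (r-1) + (2*(r:ℤ)-2)*e < G i + A + ((i:ℤ) + (r:ℤ) - 2) * e ∧ G i + A + ((i:ℤ) + (r:ℤ) - 2) * e < PQ + G 1 + ((r:ℤ)-1)*e) ∧
    (A + G (r-1) + (2*(r:ℤ)-2)*e < G i + PQ + ((i:ℤ) + (r:ℤ) - 2) * e ∧ G i + PQ + ((i:ℤ) + (r:ℤ) - 2) * e ≤ PQ + G 1 + ((r:ℤ)-1)*e
      ∧ (2 ≤ i → G i + PQ + ((i:ℤ) + (r:ℤ) - 2) * e < PQ + G 1 + ((r:ℤ)-1)*e)) ∧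
    (A + G (r-1) + (2*(r:ℤ)-2)*e ≤ G i + A + ((i:ℤ) + (r:ℤ) - 1) * e ∧ G i + A + ((i:ℤ) + (r:ℤ) - 1) * e < PQ + G 1 + ((r:ℤ)-1)*e
      ∧ (i < r - 1 → A + G (r-1) + (2*(r:ℤ)-2)*e < G i + A + ((i:ℤ) + (r:ℤ) - 1) * e)) ∧
    (A + G (r-1) + (2*(r:ℤ)-2)*e < G i + PQ + ((i:ℤ) + (r:ℤ) - 1) * e ∧ G i + PQ + ((i:ℤ) + (r:ℤ) - 1) * e < PQ + G 1 + ((r:ℤ)-1)*e) := by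
  intro i hi1 hir
  have hr := F.hr
  have hi1' : (1:ℤ) ≤ (i:ℤ) := by exact_mod_cast hi1
  have hir' : (i:ℤ) ≤ (r:ℤ) - 1 := by omega
  obtain ⟨hG1, hG1e, hr'⟩ := F.pool
  have hca : ((r-1:ℕ):ℤ) = (r:ℤ)-1 := by omega
  obtain ⟨sG1, sK1, mG1, mK1⟩ := F.hsum 1 i hi1 hir
  obtain ⟨sGr, sKr, mGr, mKr⟩ := F.hsum i (r-1) hir le_rfl
  obtain ⟨sG3, sK3, mG3, mK3⟩ := F.hsum 1 (r-1) (by omega) le_rfl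
  obtain ⟨sG0, sK0', mG0, mK0'⟩ := F.hsum 0 (r-1) (by omega) le_rfl
  rw [hca] at sGr sKr sG3 sK3 sG0
  rw [F.hG0] at sG0 mG0
  push_cast at sG0 sG1 sK1 sG3 sK3
  obtain ⟨nL, nR⟩ := F.hn i hi1 hir
  obtain ⟨n1L, n1R⟩ := F.hn 1 (by omega) (by omega)
  obtain ⟨nrL, nrR⟩ := F.hn (r-1) (by omega) le_rfl
  have hB := F.hB
  have hBP := F.hBP
  have hGP := F.hGP
  have hk1 := F.hk1
  have hk2 := F.hk2
  have hk3 := F.hk3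
  have he := F.he
  have d1 : ((i:ℤ)+(r:ℤ)-2)*e = ((r:ℤ)-1)*e - (((i:ℤ)-1)*(-e-1)) - ((i:ℤ)-1) := by ring
  have d1' : ((i:ℤ)+(r:ℤ)-2)*e = (2*(r:ℤ)-2)*e + (((r:ℤ)-1-(i:ℤ))*(-e-1)) + (-e-1)
      + ((r:ℤ)-(i:ℤ)) := by ring
  have d2 : ((i:ℤ)+(r:ℤ)-1)*e = (2*(r:ℤ)-2)*e + ((r:ℤ)-1-(i:ℤ))*(-e-1) + ((r:ℤ)-1-(i:ℤ)) := by
    ring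
  have d2' : ((i:ℤ)+(r:ℤ)-1)*e = ((r:ℤ)-1)*e - (((i:ℤ)-1)*(-e-1)) - (-e-1) - (i:ℤ) := by ring
  have d3 : (2*(r:ℤ)-2)*e = ((r:ℤ)-1)*e - (((r:ℤ)-1)*(-e-1)) - ((r:ℤ)-1) := by ring
  have hP123 : ((i:ℤ)-1)*(-e-1) + ((r:ℤ)-1-(i:ℤ))*(-e-1) = ((r:ℤ)-1)*(-e-1) - (-e-1) := by ring
  have pn1 : 0 ≤ ((i:ℤ)-1)*(-e-1) := mul_nonneg (by omega) (by omega)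
  have pn2 : 0 ≤ ((r:ℤ)-1-(i:ℤ))*(-e-1) := mul_nonneg (by omega) (by omega)
  have pn3 : 0 ≤ ((r:ℤ)-1)*(-e-1) := mul_nonneg (by omega) (by omega)
  refine ⟨⟨by linarith, by linarith⟩, ⟨by linarith, by linarith⟩, ⟨by linarith, by linarith⟩,
    ⟨by linarith, by linarith⟩, ⟨by linarith, by linarith⟩,
    ⟨by linarith, by linarith, fun h2 => ?_⟩,
    ⟨by linarith, by linarith, fun hlt => ?_⟩, ⟨by linarith, by linarith⟩⟩
  · have h2' : (2:ℤ) ≤ (i:ℤ) := by exact_mod_cast h2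
    linarith
  · have hlt' : (i:ℤ) < (r:ℤ) - 1 := by omega
    have : 0 ≤ ((r:ℤ)-1-(i:ℤ)-1)*(-e-1) := mul_nonneg (by omega) (by omega)
    have dd : ((r:ℤ)-1-(i:ℤ))*(-e-1) = ((r:ℤ)-1-(i:ℤ)-1)*(-e-1) + (-e-1) := by ring
    linarith

set_option maxHeartbeats 1000000 in
lemma Facts.bare_bnds (F : Facts r K G A B PQ e) :
    (A + G (r-1) + (2*(r:ℤ)-2)*e < B + ((r:ℤ)-1)*e ∧ B + ((r:ℤ)-1)*e < PQ + G 1 + ((r:ℤ)-1)*e) ∧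
    (A + G (r-1) + (2*(r:ℤ)-2)*e < A + ((r:ℤ)-1)*e ∧ A + ((r:ℤ)-1)*e < PQ + G 1 + ((r:ℤ)-1)*e) ∧
    (A + G (r-1) + (2*(r:ℤ)-2)*e < PQ + A + (2*(r:ℤ)-2)*e ∧ PQ + A + (2*(r:ℤ)-2)*e < PQ + G 1 + ((r:ℤ)-1)*e) ∧
    (A + G (r-1) + (2*(r:ℤ)-2)*e < PQ + B + (2*(r:ℤ)-2)*e ∧ PQ + B + (2*(r:ℤ)-2)*e < PQ + G 1 + ((r:ℤ)-1)*e) := by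
  have hr := F.hr
  obtain ⟨hG1, hG1e, hr'⟩ := F.pool
  have hca : ((r-1:ℕ):ℤ) = (r:ℤ)-1 := by omega
  obtain ⟨sG3, sK3, mG3, mK3⟩ := F.hsum 1 (r-1) (by omega) le_rfl
  obtain ⟨sG0, sK0', mG0, mK0'⟩ := F.hsum 0 (r-1) (by omega) le_rfl
  rw [hca] at sG3 sK3 sG0 sK0'
  rw [F.hG0] at sG0 mG0
  rw [F.hK0] at sK0' mK0'
  push_cast at sG0 sK0' sG3 sK3
  obtain ⟨n1L, n1R⟩ := F.hn 1 (by omega) (by omega)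
  obtain ⟨nrL, nrR⟩ := F.hn (r-1) (by omega) le_rfl
  have hB := F.hB
  have hBP := F.hBP
  have hGP := F.hGP
  have hk1 := F.hk1
  have hk2 := F.hk2
  have hk3 := F.hk3
  have he := F.he
  have d3 : (2*(r:ℤ)-2)*e = ((r:ℤ)-1)*e - (((r:ℤ)-1)*(-e-1)) - ((r:ℤ)-1) := by ring
  have d6 : ((r:ℤ)-1-1)*(-e-1) = ((r:ℤ)-1)*(-e-1) - (-e-1) := by ring
  have pn3 : 0 ≤ ((r:ℤ)-1)*(-e-1) := mul_nonneg (by omega) (by omega)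
  exact ⟨⟨by linarith, by linarith⟩, ⟨by linarith, by linarith⟩,
    ⟨by linarith, by linarith⟩, ⟨by linarith, by linarith⟩⟩


lemma coeff_EE_zero_ne {bot E : ℤ} (h : bot < E) : (EE bot E).coeff 0 = 0 := by
  rw [EE, Polynomial.coeff_X_pow, if_neg (by omega)]

lemma coeff_EE_zero_eq {bot E : ℤ} (h : E = bot) : (EE bot E).coeff 0 = 1 := by
  rw [EE, Polynomial.coeff_X_pow, if_pos (by omega)]

set_option maxHeartbeats 4000000 in
lemma abstract_span (r : ℕ) (K G : ℕ → ℤ) (A B PQ e : ℤ)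
    (F : Facts r K G A B PQ e) :
    GF r K A e * GF r G PQ e - GF r K PQ e * GF r G B e ≠ 0 ∧
    spanDeg (GF r K A e * GF r G PQ e - GF r K PQ e * GF r G B e)
      = (PQ + G 1 + ((r:ℤ)-1)*e) - (A + G (r-1) + (2*(r:ℤ)-2)*e) := by
  have hr := F.hr
  obtain ⟨bb1, bb2, bb3, bb4⟩ := F.bare_bnds
  have hfb := F.fam_bnds
  have hbt : A + G (r-1) + (2*(r:ℤ)-2)*e < PQ + G 1 + ((r:ℤ)-1)*e :=
    lt_trans bb3.1 bb3.2
  have hring : GF r K A e * GF r G PQ e - GF r K PQ e * GF r G B e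
      = (RatFunc.X^(B + ((r:ℤ)-1)*e) - RatFunc.X^(PQ + ((r:ℤ)-1)*e))
        - (RatFunc.X^(A + ((r:ℤ)-1)*e) - RatFunc.X^(PQ + ((r:ℤ)-1)*e))
        + RatFunc.X^(PQ + ((r:ℤ)-1)*e) * RatFunc.X^(A + ((r:ℤ)-1)*e)
        - RatFunc.X^(PQ + ((r:ℤ)-1)*e) * RatFunc.X^(B + ((r:ℤ)-1)*e)
        - ∑ i ∈ Finset.Icc 1 (r-1), (1 - RatFunc.X^e) *
            (RatFunc.X ^ (K i + ((i:ℤ)-1)*e) *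
              (RatFunc.X^(B + ((r:ℤ)-1)*e) - RatFunc.X^(PQ + ((r:ℤ)-1)*e)))
        + ∑ i ∈ Finset.Icc 1 (r-1), (1 - RatFunc.X^e) *
            (RatFunc.X ^ (G i + ((i:ℤ)-1)*e) *
              (RatFunc.X^(A + ((r:ℤ)-1)*e) - RatFunc.X^(PQ + ((r:ℤ)-1)*e))) := by
    unfold GF
    rw [Finset.mul_sum, Finset.mul_sum]
    simp only [← mul_assoc]
    rw [← Finset.sum_mul, ← Finset.sum_mul]
    generalize (∑ i ∈ Finset.Icc 1 (r-1), (1 - RatFunc.X^e) *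
        (RatFunc.X : RatFunc ℚ) ^ (K i + ((i:ℤ)-1)*e)) = SX
    generalize (∑ i ∈ Finset.Icc 1 (r-1), (1 - RatFunc.X^e) *
        (RatFunc.X : RatFunc ℚ) ^ (G i + ((i:ℤ)-1)*e)) = SY
    ring
  set bot := A + G (r-1) + (2*(r:ℤ)-2)*e with hbotdef
  set top := PQ + G 1 + ((r:ℤ)-1)*e with htopdef
  have hfamEq : ∀ i ∈ Finset.Icc 1 (r-1),
      RatFunc.X ^ bot * algebraMap (Polynomial ℚ) (RatFunc ℚ) (famP r K G A B PQ e bot i)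
      = (1 - RatFunc.X^e) * (RatFunc.X ^ (G i + ((i:ℤ)-1)*e) *
            (RatFunc.X^(A + ((r:ℤ)-1)*e) - RatFunc.X^(PQ + ((r:ℤ)-1)*e)))
        - (1 - RatFunc.X^e) * (RatFunc.X ^ (K i + ((i:ℤ)-1)*e) *
            (RatFunc.X^(B + ((r:ℤ)-1)*e) - RatFunc.X^(PQ + ((r:ℤ)-1)*e))) := by
    intro i hi
    rw [Finset.mem_Icc] at hi
    obtain ⟨⟨b1,t1⟩,⟨b2,t2⟩,⟨b3,t3⟩,⟨b4,t4⟩,⟨b5,t5⟩,⟨b6,t6,t6'⟩,⟨b7,t7,b7'⟩,⟨b8,t8⟩⟩ :=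
      hfb i hi.1 hi.2
    rw [famP]
    conv_lhs => simp only [map_add, map_sub, map_neg, mul_add, mul_sub, mul_neg]
    rw [shiftE (le_of_lt b1), shiftE (le_of_lt b2), shiftE (le_of_lt b3), shiftE (le_of_lt b4),
        shiftE (le_of_lt b5), shiftE (le_of_lt b6), shiftE b7, shiftE (le_of_lt b8)]
    rw [expand4, expand4]
    ring_nf
  have hbareEq : RatFunc.X ^ bot * algebraMap (Polynomial ℚ) (RatFunc ℚ) (bareP r A B PQ e bot)
      = RatFunc.X^(B + ((r:ℤ)-1)*e) - RatFunc.X^(A + ((r:ℤ)-1)*e)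
        + RatFunc.X^(PQ + ((r:ℤ)-1)*e) * RatFunc.X^(A + ((r:ℤ)-1)*e)
        - RatFunc.X^(PQ + ((r:ℤ)-1)*e) * RatFunc.X^(B + ((r:ℤ)-1)*e) := by
    rw [bareP]
    conv_lhs => simp only [map_add, map_sub, mul_add, mul_sub]
    rw [shiftE (le_of_lt bb1.1), shiftE (le_of_lt bb2.1), shiftE (le_of_lt bb3.1),
        shiftE (le_of_lt bb4.1)]
    rw [← zpow_add₀ RatFunc.X_ne_zero (PQ+((r:ℤ)-1)*e) (A+((r:ℤ)-1)*e),
        ← zpow_add₀ RatFunc.X_ne_zero (PQ+((r:ℤ)-1)*e) (B+((r:ℤ)-1)*e)]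
    ring_nf
  have hNP : GF r K A e * GF r G PQ e - GF r K PQ e * GF r G B e
      = RatFunc.X ^ bot * algebraMap (Polynomial ℚ) (RatFunc ℚ) (PP r K G A B PQ e bot) := by
    rw [PP, map_add, map_sum, mul_add, Finset.mul_sum, hbareEq,
      Finset.sum_congr rfl hfamEq, hring, Finset.sum_sub_distrib]
    ring
  -- coefficient at top
  have hcoNT : (PP r K G A B PQ e bot).coeff ((top - bot).toNat) = -1 := by
    have h0 : (bareP r A B PQ e bot).coeff ((top-bot).toNat) = 0 := by
      rw [bareP]
      simp only [Polynomial.coeff_add, Polynomial.coeff_sub]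
      rw [coeff_EE_ne (ne_of_lt bb1.2) (le_of_lt bb1.1) (le_of_lt hbt),
          coeff_EE_ne (ne_of_lt bb2.2) (le_of_lt bb2.1) (le_of_lt hbt),
          coeff_EE_ne (ne_of_lt bb3.2) (le_of_lt bb3.1) (le_of_lt hbt),
          coeff_EE_ne (ne_of_lt bb4.2) (le_of_lt bb4.1) (le_of_lt hbt)]
      ring
    have h1 : ∀ i ∈ Finset.Icc 1 (r-1),
        (famP r K G A B PQ e bot i).coeff ((top-bot).toNat)
          = if i = 1 then (-1:ℚ) else 0 := by
      intro i hi
      rw [Finset.mem_Icc] at hi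
      obtain ⟨⟨b1,t1⟩,⟨b2,t2⟩,⟨b3,t3⟩,⟨b4,t4⟩,⟨b5,t5⟩,⟨b6,t6,t6'⟩,⟨b7,t7,b7'⟩,⟨b8,t8⟩⟩ :=
        hfb i hi.1 hi.2
      rw [famP]
      simp only [Polynomial.coeff_add, Polynomial.coeff_sub, Polynomial.coeff_neg]
      rw [coeff_EE_ne (ne_of_lt t1) (le_of_lt b1) (le_of_lt hbt),
          coeff_EE_ne (ne_of_lt t2) (le_of_lt b2) (le_of_lt hbt),
          coeff_EE_ne (ne_of_lt t3) (le_of_lt b3) (le_of_lt hbt),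
          coeff_EE_ne (ne_of_lt t4) (le_of_lt b4) (le_of_lt hbt),
          coeff_EE_ne (ne_of_lt t5) (le_of_lt b5) (le_of_lt hbt),
          coeff_EE_ne (ne_of_lt t7) b7 (le_of_lt hbt),
          coeff_EE_ne (ne_of_lt t8) (le_of_lt b8) (le_of_lt hbt)]
      by_cases hi1 : i = 1
      · subst hi1
        rw [if_pos rfl]
        rw [coeff_EE_eq (by push_cast; ring) (le_of_lt b6)]
        ring
      · rw [if_neg hi1]
        rw [coeff_EE_ne (ne_of_lt (t6' (by omega))) (le_of_lt b6) (le_of_lt hbt)]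
        ring
    rw [PP, Polynomial.coeff_add, Polynomial.finset_sum_coeff, h0,
      Finset.sum_congr rfl h1,
      Finset.sum_eq_single_of_mem 1 (Finset.mem_Icc.mpr ⟨le_rfl, by omega⟩)
        (fun b _ hb => if_neg hb), if_pos rfl]
    ring
  -- coefficient at 0
  have hco0 : (PP r K G A B PQ e bot).coeff 0 = -1 := by
    have h0 : (bareP r A B PQ e bot).coeff 0 = 0 := by
      rw [bareP]
      simp only [Polynomial.coeff_add, Polynomial.coeff_sub]
      rw [coeff_EE_zero_ne bb1.1, coeff_EE_zero_ne bb2.1, coeff_EE_zero_ne bb3.1,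
        coeff_EE_zero_ne bb4.1]
      ring
    have h1 : ∀ i ∈ Finset.Icc 1 (r-1),
        (famP r K G A B PQ e bot i).coeff 0 = if i = r-1 then (-1:ℚ) else 0 := by
      intro i hi
      rw [Finset.mem_Icc] at hi
      obtain ⟨⟨b1,t1⟩,⟨b2,t2⟩,⟨b3,t3⟩,⟨b4,t4⟩,⟨b5,t5⟩,⟨b6,t6,t6'⟩,⟨b7,t7,b7'⟩,⟨b8,t8⟩⟩ :=
        hfb i hi.1 hi.2
      rw [famP]
      simp only [Polynomial.coeff_add, Polynomial.coeff_sub, Polynomial.coeff_neg]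
      rw [coeff_EE_zero_ne b1, coeff_EE_zero_ne b2, coeff_EE_zero_ne b3, coeff_EE_zero_ne b4,
        coeff_EE_zero_ne b5, coeff_EE_zero_ne b6, coeff_EE_zero_ne b8]
      by_cases hir : i = r-1
      · subst hir
        rw [if_pos rfl]
        rw [coeff_EE_zero_eq (by
          rw [show (((r-1:ℕ)):ℤ) = (r:ℤ)-1 by omega, hbotdef]; ring)]
        ring
      · rw [if_neg hir]
        rw [coeff_EE_zero_ne (b7' (by omega))]
        ring
    rw [PP, Polynomial.coeff_add, Polynomial.finset_sum_coeff, h0,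
      Finset.sum_congr rfl h1,
      Finset.sum_eq_single_of_mem (r-1) (Finset.mem_Icc.mpr ⟨by omega, le_rfl⟩)
        (fun b _ hb => if_neg hb), if_pos rfl]
    ring
  -- natDegree
  have hnd : (PP r K G A B PQ e bot).natDegree ≤ (top - bot).toNat := by
    rw [PP]
    apply ndadd
    · rw [bareP]
      exact ndsub (ndadd (ndsub (natDegree_EE_le (le_of_lt bb1.2)) (natDegree_EE_le (le_of_lt bb2.2)))
        (natDegree_EE_le (le_of_lt bb3.2))) (natDegree_EE_le (le_of_lt bb4.2))
    · apply Polynomial.natDegree_sum_le_of_forall_le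
      intro i hi
      rw [Finset.mem_Icc] at hi
      obtain ⟨⟨b1,t1⟩,⟨b2,t2⟩,⟨b3,t3⟩,⟨b4,t4⟩,⟨b5,t5⟩,⟨b6,t6,t6'⟩,⟨b7,t7,b7'⟩,⟨b8,t8⟩⟩ :=
        hfb i hi.1 hi.2
      rw [famP]
      exact ndadd (ndsub (ndsub (ndadd (ndsub (ndadd (ndadd (ndneg (natDegree_EE_le (le_of_lt t1)))
        (natDegree_EE_le (le_of_lt t2))) (natDegree_EE_le (le_of_lt t3)))
        (natDegree_EE_le (le_of_lt t4))) (natDegree_EE_le (le_of_lt t5)))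
        (natDegree_EE_le t6)) (natDegree_EE_le (le_of_lt t7))) (natDegree_EE_le (le_of_lt t8))
  have hPne : PP r K G A B PQ e bot ≠ 0 := by
    intro h
    rw [h, Polynomial.coeff_zero] at hco0
    norm_num at hco0
  have hNTeq : (PP r K G A B PQ e bot).natDegree = (top - bot).toNat :=
    le_antisymm hnd (Polynomial.le_natDegree_of_ne_zero (by rw [hcoNT]; norm_num))
  have hmapne : algebraMap (Polynomial ℚ) (RatFunc ℚ) (PP r K G A B PQ e bot) ≠ 0 :=
    RatFunc.algebraMap_ne_zero hPne
  constructor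
  · rw [hNP]
    exact mul_ne_zero (X_zpow_ne_zero bot) hmapne
  · rw [hNP, spanDeg_mul (X_zpow_ne_zero bot) hmapne, spanDeg_X_zpow,
      spanDeg_algebraMap _ (by rw [hco0]; norm_num), hNTeq]
    omega

end Bounds

lemma spanDeg_div {f g : RatFunc ℚ} (hf : f ≠ 0) (hg : g ≠ 0) :
    spanDeg (f / g) = spanDeg f - spanDeg g := by
  rw [div_eq_mul_inv, spanDeg_mul hf (inv_ne_zero hg), spanDeg_inv hg]
  ring


end TTK

open TTK

set_option maxHeartbeats 4000000 in
theorem stmt16 (p q r : ℕ) (qinv s : ℤ) (hcop : Nat.Coprime p q)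
    (hq0 : 0 < q) (hqp : q < p) (hr1 : 1 < r) (hrp : r < p)
    (hqinv : ((q : ℤ) * qinv) % (p : ℤ) = 1) (hs : s < 0)
    (hbig : ∀ i, 1 ≤ i → i ≤ r - 1 →
      (r : ℤ) * |s| > di p r qinv i * (q : ℤ) ∧ (r : ℤ) * |s| > (ki p q r qinv i : ℤ) * (p : ℤ))
    (hm : mIdx p r qinv = r - 1) :
    DD p q r qinv s ≠ 0 ∧
    spanDeg (DD p q r qinv s) =
      ((p : ℤ) - 1) * ((q : ℤ) - 1) +
        (Qi p r qinv 1 - Qp' p r qinv - Qi p r qinv (r - 1)) * (q : ℤ) -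
        ((r : ℤ) - 1) * ((r : ℤ) * s) := by
  have hp0 : 0 < p := lt_trans hq0 hqp
  have hp1 : 1 < (p:ℤ) := by exact_mod_cast lt_of_le_of_lt hq0 hqp
  have hq0' : (0:ℤ) < q := by exact_mod_cast hq0
  have hp0' : (0:ℤ) < p := by exact_mod_cast hp0
  have hr0 : 0 < r := by omega
  have habs : |s| = -s := abs_of_neg hs
  -- Q basics
  have hQmem : ∀ i, i < r → Qi p r qinv i ∈ Qset p r qinv := fun i hi =>
    Qi_mem hrp hp1 hqinv hi
  have hQi0 : Qi p r qinv 0 = 0 := Qi_zero hp0 hr0 hrp hp1 hqinv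
  have hQmono : ∀ i j, i < j → j < r → Qi p r qinv i < Qi p r qinv j := fun i j hij hj =>
    Qi_strictMono hrp hp1 hqinv hij hj
  have hQbd : ∀ i, i < r → 0 ≤ Qi p r qinv i ∧ Qi p r qinv i < p := by
    intro i hi
    have mem := hQmem i hi
    rw [Qset, Finset.mem_image] at mem
    obtain ⟨n, _, hn⟩ := mem
    rw [← hn]
    exact ⟨res_nonneg hp0 _, res_lt_p hp0 _⟩
  have hQ'bd : 0 ≤ Qp' p r qinv ∧ Qp' p r qinv < p := by
    rw [Qp']
    exact ⟨res_nonneg hp0 _, res_lt_p hp0 _⟩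
  -- all elements of Q are < Q'
  have hQltQ' : ∀ x ∈ Qset p r qinv, x < Qp' p r qinv := by
    have hcard : (Qset p r qinv).card = r := Qset_card hrp hp1 hqinv
    have hle : ((Qset p r qinv).filter (fun x => x < Qp' p r qinv)).card ≤ r :=
      le_trans (Finset.card_filter_le _ _) (le_of_eq hcard)
    have hfil : ((Qset p r qinv).filter (fun x => x < Qp' p r qinv)).card = r := by
      have hmm : ((Qset p r qinv).filter (fun x => x < Qp' p r qinv)).card - 1 = r - 1 := hm
      omega
    have heq := Finset.eq_of_subset_of_card_le (Finset.filter_subset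
      (fun x => x < Qp' p r qinv) (Qset p r qinv)) (by rw [hfil, hcard])
    intro x hx
    rw [← heq] at hx
    exact (Finset.mem_filter.mp hx).2
  have hQrQ' : Qi p r qinv (r-1) < Qp' p r qinv := hQltQ' _ (hQmem (r-1) (by omega))
  have hQmax : ∀ x ∈ Qset p r qinv, x ≤ Qi p r qinv (r-1) := by
    intro x hx
    obtain ⟨j, hj, hje⟩ := Qi_surj hrp hp1 hqinv hx
    rcases Nat.lt_or_ge j (r-1) with h | h
    · rw [← hje]; exact le_of_lt (hQmono j (r-1) h (by omega))
    · have : j = r - 1 := by omega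
      rw [← hje, this]
  have hq1mod := qinv_modeq hp1 hqinv
  -- mod facts
  have hmodQ : ∀ i, 1 ≤ i → i ≤ r-1 →
      1 ≤ (Qi p r qinv i * q) % p ∧ (Qi p r qinv i * q) % p ≤ (r:ℤ)-1 := by
    intro i hi1 hir
    have mem := hQmem i (by omega)
    rw [Qset, Finset.mem_image] at mem
    obtain ⟨n, hn, hne⟩ := mem
    rw [Finset.mem_range] at hn
    have h1 : Qi p r qinv i ≡ (n:ℤ) * qinv [ZMOD (p:ℤ)] := hne ▸ res_modEq _
    have h2 : Qi p r qinv i * q ≡ (n:ℤ) * qinv * q [ZMOD (p:ℤ)] := h1.mul_right _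
    have h3 : ((n:ℤ)) * ((q:ℤ) * qinv) ≡ (n:ℤ) * 1 [ZMOD (p:ℤ)] := Int.ModEq.mul_left _ hq1mod
    have h4 : Qi p r qinv i * q ≡ (n:ℤ) [ZMOD (p:ℤ)] := by
      calc Qi p r qinv i * q ≡ (n:ℤ) * qinv * q [ZMOD (p:ℤ)] := h2
        _ = (n:ℤ) * ((q:ℤ) * qinv) := by ring
        _ ≡ (n:ℤ) * 1 [ZMOD (p:ℤ)] := h3
        _ = (n:ℤ) := by ring
    have h5 : (Qi p r qinv i * q) % p = (n:ℤ) % p := h4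
    have hnp : (n:ℤ) < p := by exact_mod_cast lt_trans hn hrp
    have h6 : (n:ℤ) % p = n := Int.emod_eq_of_lt (by positivity) hnp
    have hn0 : n ≠ 0 := by
      intro h0
      subst h0
      have : Qi p r qinv i = 0 := by
        rw [← hne]
        simp [res]
      have := hQmono 0 i (by omega) (by omega)
      rw [hQi0] at this
      omega
    constructor
    · rw [h5, h6]; exact_mod_cast Nat.one_le_iff_ne_zero.mpr hn0
    · rw [h5, h6]
      omega
  have hmodQ' : (Qp' p r qinv * q) % p = r := by
    have h1 : Qp' p r qinv ≡ (r:ℤ) * qinv [ZMOD (p:ℤ)] := res_modEq _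
    have h2 : Qp' p r qinv * q ≡ (r:ℤ) * qinv * q [ZMOD (p:ℤ)] := h1.mul_right _
    have h3 : ((r:ℤ)) * ((q:ℤ) * qinv) ≡ (r:ℤ) * 1 [ZMOD (p:ℤ)] := Int.ModEq.mul_left _ hq1mod
    have h4 : Qp' p r qinv * q ≡ (r:ℤ) [ZMOD (p:ℤ)] := by
      calc Qp' p r qinv * q ≡ (r:ℤ) * qinv * q [ZMOD (p:ℤ)] := h2
        _ = (r:ℤ) * ((q:ℤ) * qinv) := by ring
        _ ≡ (r:ℤ) * 1 [ZMOD (p:ℤ)] := h3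
        _ = (r:ℤ) := by ring
    have h5 : (Qp' p r qinv * q) % p = (r:ℤ) % p := h4
    rw [h5, Int.emod_eq_of_lt (by positivity) (by exact_mod_cast hrp)]
  -- counting
  have hcount : ∀ x : ℤ, 0 ≤ x → x ≤ p →
      (((Rset p q qinv).filter (fun l => l < x)).card : ℤ) = (x*q)/(p:ℤ) := by
    intro x h0 h1
    have h := Rcount hp1 hq0 hqp hqinv x.toNat (by omega)
    rw [Int.toNat_of_nonneg h0] at h
    exact_mod_cast h
  have hkbar0 : kbar p q r qinv 0 = 0 := by rw [kbar]; simp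
  have hkbar_succ : ∀ n : ℕ, kbar p q r qinv (n+1) = kbar p q r qinv n + ki p q r qinv (n+1) := by
    intro n
    rw [kbar, kbar, Finset.sum_Icc_succ_top (by omega : 1 ≤ n + 1)]
  have hkfilter : ∀ i, i ≤ r-1 → ((kbar p q r qinv i : ℤ)) = (Qi p r qinv i * q) / (p:ℤ) := by
    intro i
    induction i with
    | zero =>
      intro _
      rw [hkbar0, hQi0]
      norm_num
    | succ n ih =>
      intro hn1
      have hnr : n ≤ r - 1 := by omega
      have hmono' : Qi p r qinv n ≤ Qi p r qinv (n+1) :=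
        le_of_lt (hQmono n (n+1) (by omega) (by omega))
      have hki : ki p q r qinv (n+1)
          = ((Rset p q qinv).filter
              (fun l => Qi p r qinv n ≤ l ∧ l < Qi p r qinv (n+1))).card := by
        rw [ki, if_neg (by omega : ¬ n+1 = r), Nat.add_sub_cancel]
      have h1 := hcount (Qi p r qinv (n+1)) (hQbd (n+1) (by omega)).1
        (le_of_lt (hQbd (n+1) (by omega)).2)
      have h2 := hcount (Qi p r qinv n) (hQbd n (by omega)).1 (le_of_lt (hQbd n (by omega)).2)
      have h3 := filter_lt_split (Rset p q qinv) hmono'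
      have ihn := ih hnr
      rw [hkbar_succ n, hki]
      push_cast
      push_cast at ihn
      omega
  have hkbarp : ((kbar' p q r qinv : ℤ)) = (Qp' p r qinv * q) / (p:ℤ) := by
    have hk'e : k' p q r qinv
        = ((Rset p q qinv).filter
            (fun l => Qi p r qinv (r-1) ≤ l ∧ l < Qp' p r qinv)).card := by
      rw [k', hm]
    have h3 := filter_lt_split (Rset p q qinv) (le_of_lt hQrQ')
    have h1 := hcount (Qp' p r qinv) hQ'bd.1 (le_of_lt hQ'bd.2)
    have h2 := hcount (Qi p r qinv (r-1)) (hQbd (r-1) (by omega)).1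
      (le_of_lt (hQbd (r-1) (by omega)).2)
    have h4 := hkfilter (r-1) le_rfl
    rw [kbar', hm, hk'e]
    push_cast
    push_cast at h4
    omega
  -- C9 : Q' - Q_{r-1} ≤ Q_1
  have hC9 : Qp' p r qinv - Qi p r qinv (r-1) ≤ Qi p r qinv 1 := by
    set x := Qp' p r qinv - Qi p r qinv 1 with hxdef
    have hQ1Q' : Qi p r qinv 1 < Qp' p r qinv := hQltQ' _ (hQmem 1 (by omega))
    have hx0 : 0 < x := by omega
    have hxp : x < p := by
      have := (hQbd 1 (by omega)).1
      have := hQ'bd.2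
      omega
    set ν := (Qi p r qinv 1 * q) % (p:ℤ) with hνdef
    obtain ⟨hν1, hνr⟩ := hmodQ 1 (le_refl 1) (by omega)
    -- x ≡ (r - ν) * qinv  [ZMOD p]
    have hxq : x * q ≡ (r:ℤ) - ν [ZMOD (p:ℤ)] := by
      have e1 : Qp' p r qinv * q ≡ (r:ℤ) [ZMOD (p:ℤ)] := by
        have : (Qp' p r qinv * q) % (p:ℤ) = (r:ℤ) % (p:ℤ) := by
          rw [hmodQ', Int.emod_eq_of_lt (by positivity) (by exact_mod_cast hrp)]
        exact this
      have e2 : Qi p r qinv 1 * q ≡ ν [ZMOD (p:ℤ)] := by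
        have : (Qi p r qinv 1 * q) % (p:ℤ) = ν % (p:ℤ) := by
          rw [← hνdef, Int.emod_emod_of_dvd _ dvd_rfl]
        exact this
      have := e1.sub e2
      have hxe : x * q = Qp' p r qinv * q - Qi p r qinv 1 * q := by rw [hxdef]; ring
      rw [hxe]
      exact this
    have hxmem : x ∈ Qset p r qinv := by
      rw [Qset, Finset.mem_image]
      refine ⟨((r:ℤ) - ν).toNat, Finset.mem_range.mpr (by omega), ?_⟩
      have hcast : ((((r:ℤ) - ν).toNat : ℤ)) = (r:ℤ) - ν := Int.toNat_of_nonneg (by omega)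
      rw [hcast]
      apply res_eq_of _ (by omega) hxp
      -- x ≡ (r - ν) * qinv [ZMOD p]
      have h2 : x * q * qinv ≡ ((r:ℤ) - ν) * qinv [ZMOD (p:ℤ)] := hxq.mul_right _
      calc x = x * 1 := by ring
        _ ≡ x * ((q:ℤ) * qinv) [ZMOD (p:ℤ)] := (Int.ModEq.mul_left _ hq1mod).symm
        _ = x * q * qinv := by ring
        _ ≡ ((r:ℤ) - ν) * qinv [ZMOD (p:ℤ)] := h2
    have := hQmax x hxmem
    omega
  -- Build the Facts structure
  have F : Facts r (fun i => (kbar p q r qinv i : ℤ) * p) (fun i => Qi p r qinv i * q)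
      ((kbar' p q r qinv : ℤ) * p) (Qp' p r qinv * q) ((p:ℤ)*(q:ℤ)) ((r:ℤ)*s) := by
    have hADecomp : Qp' p r qinv * q = (p:ℤ) * ((kbar' p q r qinv : ℤ)) + r := by
      have := Int.emod_add_mul_ediv (Qp' p r qinv * q) (p:ℤ)
      rw [hmodQ'] at this
      rw [hkbarp]
      linarith
    have hGdecomp : ∀ i, 1 ≤ i → i ≤ r-1 →
        Qi p r qinv i * q = (p:ℤ) * ((kbar p q r qinv i : ℤ)) + (Qi p r qinv i * q) % p := by
      intro i hi1 hir
      have := Int.emod_add_mul_ediv (Qi p r qinv i * q) (p:ℤ)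
      rw [hkfilter i hir]
      omega
    refine ⟨hr1, mul_neg_of_pos_of_neg (by positivity) hs, by rw [hQi0]; ring,
      by rw [hkbar0]; norm_num, by positivity, ?_, ?_, ?_, ?_, ?_, ?_, ?_, ?_⟩
    · -- hstep
      intro i hi1 hir
      obtain ⟨hd, hk⟩ := hbig i hi1 hir
      rw [di, if_neg (by omega : ¬ i = r)] at hd
      rw [habs] at hd hk
      have hkc : (kbar p q r qinv i : ℤ) = (kbar p q r qinv (i-1) : ℤ) + (ki p q r qinv i : ℤ) := by
        have := hkbar_succ (i-1)
        rw [show i - 1 + 1 = i from by omega] at this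
        rw [this]
        push_cast
        ring
      have hqmono : Qi p r qinv (i-1) * q ≤ Qi p r qinv i * q := by
        have := hQmono (i-1) i (by omega) (by omega)
        nlinarith
      refine ⟨by nlinarith, by nlinarith [Int.natCast_nonneg (ki p q r qinv i)], hqmono, ?_⟩
      · nlinarith [Int.natCast_nonneg (ki p q r qinv i)]
    · -- hn
      intro i hi1 hir
      obtain ⟨h1, h2⟩ := hmodQ i hi1 hir
      have hd := hGdecomp i hi1 hir
      constructor
      · nlinarith
      · nlinarith
    · -- hB
      linarith [hADecomp]
    · -- hBP
      exact mul_lt_mul_of_pos_right hQ'bd.2 hq0'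
    · -- hGP
      exact mul_lt_mul_of_pos_right (hQbd (r-1) (by omega)).2 hq0'
    · -- hk1
      have hdivle : (Qi p r qinv (r-1) * q) / (p:ℤ) ≤ (Qp' p r qinv * q) / (p:ℤ) :=
        Int.ediv_le_ediv hp0' (mul_le_mul_of_nonneg_right (le_of_lt hQrQ') (le_of_lt hq0'))
      rw [hkfilter (r-1) le_rfl, hkbarp]
      nlinarith
    · -- hk2
      have hd := hGdecomp (r-1) (by omega) le_rfl
      obtain ⟨h1, h2⟩ := hmodQ (r-1) (by omega) le_rfl
      have hmul : (Qp' p r qinv - Qi p r qinv (r-1)) * q ≤ Qi p r qinv 1 * q :=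
        mul_le_mul_of_nonneg_right hC9 (le_of_lt hq0')
      nlinarith [hADecomp]
    · -- hk3
      have hd := hGdecomp (r-1) (by omega) le_rfl
      obtain ⟨h1, h2⟩ := hmodQ (r-1) (by omega) le_rfl
      have hQ'P : Qp' p r qinv * q < (p:ℤ)*q := mul_lt_mul_of_pos_right hQ'bd.2 hq0'
      nlinarith [hADecomp]
  obtain ⟨hNne, hNspan⟩ := abstract_span r _ _ _ _ _ _ F
  -- identify
  have hca : ((r-1:ℕ):ℤ) = (r:ℤ)-1 := by omega
  have hXt : XXt p q r qinv s
      = GF r (fun i => (kbar p q r qinv i : ℤ) * p) ((kbar' p q r qinv : ℤ) * p) ((r:ℤ)*s) := by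
    unfold XXt GF
    rw [hm, hca]
  have hX : XX p q r qinv s
      = GF r (fun i => (kbar p q r qinv i : ℤ) * p) ((p:ℤ)*(q:ℤ)) ((r:ℤ)*s) := by
    unfold XX GF
    rfl
  have hY : YY p q r qinv s
      = GF r (fun i => Qi p r qinv i * q) ((p:ℤ)*(q:ℤ)) ((r:ℤ)*s) := by
    unfold YY GF
    rfl
  have hYt : YYt p q r qinv s
      = GF r (fun i => Qi p r qinv i * q) (Qp' p r qinv * q) ((r:ℤ)*s) := by
    unfold YYt GF
    rw [hm, hca]
  have hNid : XXt p q r qinv s * YY p q r qinv s - XX p q r qinv s * YYt p q r qinv s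
      = GF r (fun i => (kbar p q r qinv i : ℤ) * p) ((kbar' p q r qinv : ℤ) * p) ((r:ℤ)*s)
          * GF r (fun i => Qi p r qinv i * q) ((p:ℤ)*(q:ℤ)) ((r:ℤ)*s)
        - GF r (fun i => (kbar p q r qinv i : ℤ) * p) ((p:ℤ)*(q:ℤ)) ((r:ℤ)*s)
          * GF r (fun i => Qi p r qinv i * q) (Qp' p r qinv * q) ((r:ℤ)*s) := by
    rw [hXt, hX, hY, hYt]
  -- denominators and 1 - X
  have hden : ∀ m : ℕ, 0 < m →
      (1 - RatFunc.X ^ (m:ℤ) : RatFunc ℚ) ≠ 0 ∧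
        spanDeg (1 - RatFunc.X ^ (m:ℤ) : RatFunc ℚ) = m := by
    intro m hm0
    have hco : (1 - Polynomial.X ^ m : Polynomial ℚ).coeff 0 = 1 := by
      rw [Polynomial.coeff_sub, Polynomial.coeff_one, Polynomial.coeff_X_pow,
        if_pos rfl, if_neg (by omega)]
      norm_num
    have hpoly : (1 - Polynomial.X ^ m : Polynomial ℚ) ≠ 0 := by
      intro h
      rw [h, Polynomial.coeff_zero] at hco
      norm_num at hco
    have hmap : (1 - RatFunc.X ^ (m:ℤ) : RatFunc ℚ)
        = algebraMap (Polynomial ℚ) (RatFunc ℚ) (1 - Polynomial.X ^ m) := by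
      rw [map_sub, map_one, map_pow, RatFunc.algebraMap_X, zpow_natCast]
    have hnd : (1 - Polynomial.X ^ m : Polynomial ℚ).natDegree = m := by
      rw [show (1 - Polynomial.X ^ m : Polynomial ℚ) = -(Polynomial.X ^ m - Polynomial.C 1) from
        by rw [Polynomial.C_1]; ring, Polynomial.natDegree_neg, Polynomial.natDegree_X_pow_sub_C]
    refine ⟨by rw [hmap]; exact RatFunc.algebraMap_ne_zero hpoly, ?_⟩
    rw [hmap, spanDeg_algebraMap _ (by rw [hco]; norm_num), hnd]
  have h1Xne : (1 - RatFunc.X : RatFunc ℚ) ≠ 0 := by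
    have := (hden 1 one_pos).1
    rwa [Nat.cast_one, zpow_one] at this
  have h1Xspan : spanDeg (1 - RatFunc.X : RatFunc ℚ) = 1 := by
    have := (hden 1 one_pos).2
    rwa [Nat.cast_one, zpow_one] at this
  obtain ⟨hpne, hpspan⟩ := hden p hp0
  obtain ⟨hqne, hqspan⟩ := hden q hq0
  obtain ⟨hrne, hrspan⟩ := hden r hr0
  have hdenne : ((1 - RatFunc.X ^ (p:ℤ)) * (1 - RatFunc.X ^ (q:ℤ)) * (1 - RatFunc.X ^ (r:ℤ))
      : RatFunc ℚ) ≠ 0 := mul_ne_zero (mul_ne_zero hpne hqne) hrne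
  have hNne' : XXt p q r qinv s * YY p q r qinv s - XX p q r qinv s * YYt p q r qinv s ≠ 0 := by
    rw [hNid]; exact hNne
  have hnumne : (1 - RatFunc.X) *
      (XXt p q r qinv s * YY p q r qinv s - XX p q r qinv s * YYt p q r qinv s) ≠ 0 :=
    mul_ne_zero h1Xne hNne'
  constructor
  · rw [DD]
    exact div_ne_zero hnumne hdenne
  · rw [DD, spanDeg_div hnumne hdenne, spanDeg_mul h1Xne hNne',
      spanDeg_mul (mul_ne_zero hpne hqne) hrne, spanDeg_mul hpne hqne,
      h1Xspan, hpspan, hqspan, hrspan, hNid, hNspan]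
    have hA : (kbar' p q r qinv : ℤ) * p = Qp' p r qinv * q - r := by
      have := Int.emod_add_mul_ediv (Qp' p r qinv * q) (p:ℤ)
      rw [hmodQ'] at this
      rw [hkbarp]
      linarith
    rw [hA]
    push_cast
    ring
end
end

section
/- If 0 < m < r−1, then Q_1·q − k̄_1·p > Q_{m+1}·q − k̄_{m+1}·p. -/
open Finset

noncomputable section

open TTK


section Proof

variable {p q r : ℕ} {qinv : ℤ}

/-- the label of a point -/
def lab (p q : ℕ) (x : ℤ) : ℤ := (x * q) % (p : ℤ)

variable (hq0 : 0 < q) (hqp : q < p) (hr1 : 1 < r) (hrp : r < p)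
    (hqinv : ((q : ℤ) * qinv) % (p : ℤ) = 1)

include hq0 hqp in
lemma hp0 : (0:ℤ) < (p:ℤ) := by exact_mod_cast hq0.trans hqp

include hq0 hqp hqinv in
lemma modeq_qinv : ((q:ℤ) * qinv) ≡ 1 [ZMOD (p:ℕ)] := by
  have hp : (1:ℤ) < (p:ℤ) := by exact_mod_cast lt_of_le_of_lt hq0 hqp
  show ((q:ℤ) * qinv) % (p:ℤ) = 1 % (p:ℤ)
  rw [hqinv, Int.emod_eq_of_lt (by norm_num) hp]

include hq0 hqp hqinv in
lemma lab_res (n : ℤ) : lab p q (res p (n * qinv)) = n % (p:ℤ) := by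
  have hp : (0:ℤ) < (p:ℤ) := hp0 hq0 hqp
  have h1 : res p (n * qinv) ≡ n * qinv [ZMOD (p:ℕ)] := Int.emod_emod_of_dvd _ dvd_rfl
  have h2 : res p (n * qinv) * q ≡ n * qinv * q [ZMOD (p:ℕ)] := Int.ModEq.mul_right _ h1
  have h3 : n * qinv * q ≡ n [ZMOD (p:ℕ)] := by
    calc n * qinv * q = n * (q * qinv) := by ring
    _ ≡ n * 1 [ZMOD (p:ℕ)] := (modeq_qinv hq0 hqp hqinv).mul_left n
    _ = n := by ring
  have := h2.trans h3
  simpa [lab, Int.ModEq, Int.emod_emod_of_dvd] using this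

include hq0 hqp hqinv in
lemma res_lab (x : ℤ) (h0 : 0 ≤ x) (h1 : x < p) : res p (lab p q x * qinv) = x := by
  have hp : (0:ℤ) < (p:ℤ) := hp0 hq0 hqp
  have ha : lab p q x ≡ x * q [ZMOD (p:ℕ)] := Int.emod_emod_of_dvd _ dvd_rfl
  have h2 : lab p q x * qinv ≡ x * q * qinv [ZMOD (p:ℕ)] := Int.ModEq.mul_right _ ha
  have h3 : x * q * qinv ≡ x [ZMOD (p:ℕ)] := by
    calc x * q * qinv = x * (q * qinv) := by ring
    _ ≡ x * 1 [ZMOD (p:ℕ)] := (modeq_qinv hq0 hqp hqinv).mul_left x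
    _ = x := by ring
  have h4 := h2.trans h3
  have : lab p q x * qinv % (p:ℤ) = x % (p:ℤ) := h4
  rw [res, this, Int.emod_eq_of_lt h0 (by exact_mod_cast h1)]


lemma lab_nonneg (hp : (0:ℤ) < p) (x : ℤ) : 0 ≤ lab p q x := Int.emod_nonneg _ (ne_of_gt hp)

lemma lab_lt (hp : (0:ℤ) < p) (x : ℤ) : lab p q x < p := Int.emod_lt_of_pos _ hp

lemma res_nonneg (hp : (0:ℤ) < p) (x : ℤ) : 0 ≤ res p x := Int.emod_nonneg _ (ne_of_gt hp)

lemma res_lt (hp : (0:ℤ) < p) (x : ℤ) : res p x < p := Int.emod_lt_of_pos _ hp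

include hq0 hqp hrp hqinv in
lemma mem_Qset_iff (x : ℤ) :
    x ∈ Qset p r qinv ↔ 0 ≤ x ∧ x < p ∧ lab p q x < r := by
  have hp : (0:ℤ) < (p:ℤ) := hp0 hq0 hqp
  constructor
  · rintro hx
    obtain ⟨n, hn, rfl⟩ := Finset.mem_image.mp hx
    have hn' : n < r := Finset.mem_range.mp hn
    refine ⟨res_nonneg hp _, res_lt hp _, ?_⟩
    rw [lab_res hq0 hqp hqinv]
    have : ((n:ℤ)) % (p:ℤ) = n := Int.emod_eq_of_lt (by positivity) (by exact_mod_cast hn'.trans hrp)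
    rw [this]; exact_mod_cast hn'
  · rintro ⟨h0, h1, h2⟩
    refine Finset.mem_image.mpr ⟨(lab p q x).toNat, Finset.mem_range.mpr ?_, ?_⟩
    · have := lab_nonneg (q := q) hp x
      omega
    · have hcast : ((lab p q x).toNat : ℤ) = lab p q x := Int.toNat_of_nonneg (lab_nonneg hp x)
      rw [hcast]
      exact res_lab hq0 hqp hqinv x h0 h1

include hq0 hqp hqinv in
lemma mem_Rset_iff (x : ℤ) :
    x ∈ Rset p q qinv ↔ 0 ≤ x ∧ x < p ∧ (p:ℤ) - q ≤ lab p q x := by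
  have hp : (0:ℤ) < (p:ℤ) := hp0 hq0 hqp
  constructor
  · rintro hx
    obtain ⟨n, hn, rfl⟩ := Finset.mem_image.mp hx
    obtain ⟨hn1, hn2⟩ := Finset.mem_Icc.mp hn
    refine ⟨res_nonneg hp _, res_lt hp _, ?_⟩
    have : -(n:ℤ) * qinv = (-(n:ℤ)) * qinv := by ring
    rw [this, lab_res hq0 hqp hqinv]
    have hq' : (n:ℤ) ≤ (q:ℤ) := by exact_mod_cast hn2
    have hn1' : (1:ℤ) ≤ (n:ℤ) := by exact_mod_cast hn1
    have hqp' : (q:ℤ) < (p:ℤ) := by exact_mod_cast hqp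
    have : (-(n:ℤ)) % (p:ℤ) = p - n := by
      have h1 : (-(n:ℤ)) % (p:ℤ) = (-(n:ℤ) + p) % p := by
        conv_lhs => rw [← Int.add_mul_emod_self_left (a := -(n:ℤ)) (b := (p:ℤ)) (c := 1)]
        ring_nf
      have h2 : -(n:ℤ) + p = (p:ℤ) - n := by ring
      rw [h1, h2, Int.emod_eq_of_lt (by omega) (by omega)]
    omega
  · rintro ⟨h0, h1, h2⟩
    have hlt := lab_lt (q := q) hp x
    have hnn := lab_nonneg (q := q) hp x
    set n : ℤ := (p:ℤ) - lab p q x with hn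
    have hq' : (q:ℤ) < (p:ℤ) := by exact_mod_cast hqp
    have hn1 : 1 ≤ n := by omega
    have hn2 : n ≤ q := by omega
    refine Finset.mem_image.mpr ⟨n.toNat, Finset.mem_Icc.mpr ⟨by omega, by omega⟩, ?_⟩
    have hcast : ((n.toNat : ℕ) : ℤ) = n := Int.toNat_of_nonneg (by omega)
    rw [hcast]
    have hmod : (-n) ≡ lab p q x [ZMOD (p:ℕ)] := by
      have h3 : (-n) % (p:ℤ) = (-n + p) % p := by
        conv_lhs => rw [← Int.add_mul_emod_self_left (a := -n) (b := (p:ℤ)) (c := 1)]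
        ring_nf
      show (-n) % (p:ℤ) = _ % (p:ℤ)
      rw [h3]
      have h4 : -n + p = lab p q x := by omega
      rw [h4]
    have : res p (-n * qinv) = res p (lab p q x * qinv) := by
      show (-n * qinv) % (p:ℤ) = _
      exact Int.ModEq.mul_right _ hmod
    rw [this, res_lab hq0 hqp hqinv x h0 h1]


include hq0 hqp hrp hqinv in
lemma card_Qset : (Qset p r qinv).card = r := by
  have hp : (0:ℤ) < (p:ℤ) := hp0 hq0 hqp
  rw [Qset, Finset.card_image_of_injOn, Finset.card_range]
  intro a ha b hb hab
  simp only [Finset.coe_range, Set.mem_Iio] at ha hb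
  have h1 := lab_res (p := p) hq0 hqp hqinv (a : ℤ)
  have h2 := lab_res (p := p) hq0 hqp hqinv (b : ℤ)
  simp only at hab
  rw [hab, h2] at h1
  have ha' : ((a:ℤ)) % (p:ℤ) = a := Int.emod_eq_of_lt (by positivity) (by exact_mod_cast ha.trans hrp)
  have hb' : ((b:ℤ)) % (p:ℤ) = b := Int.emod_eq_of_lt (by positivity) (by exact_mod_cast hb.trans hrp)
  rw [ha', hb'] at h1
  exact_mod_cast h1.symm

include hq0 hqp hrp hqinv in
lemma length_sortQ : ((Qset p r qinv).sort (· ≤ ·)).length = r := by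
  rw [Finset.length_sort, card_Qset hq0 hqp hrp hqinv]

include hq0 hqp hrp hqinv in
lemma Qi_mem {i : ℕ} (hi : i < r) : Qi p r qinv i ∈ Qset p r qinv := by
  have hl : i < ((Qset p r qinv).sort (· ≤ ·)).length := by
    rw [length_sortQ hq0 hqp hrp hqinv]; exact hi
  rw [Qi, List.getD_eq_getElem _ _ hl]
  exact (Finset.mem_sort _).mp (List.getElem_mem hl)

include hq0 hqp hrp hqinv in
lemma Qi_strictMono {i j : ℕ} (hij : i < j) (hj : j < r) :
    Qi p r qinv i < Qi p r qinv j := by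
  have hl : j < ((Qset p r qinv).sort (· ≤ ·)).length := by
    rw [length_sortQ hq0 hqp hrp hqinv]; exact hj
  have hli : i < ((Qset p r qinv).sort (· ≤ ·)).length := lt_trans hij hl
  rw [Qi, Qi, List.getD_eq_getElem _ _ hl, List.getD_eq_getElem _ _ hli]
  have hs := (Finset.sortedLT_sort (Qset p r qinv)).pairwise
  exact List.pairwise_iff_get.mp hs ⟨i, hli⟩ ⟨j, hl⟩ hij

include hq0 hqp hrp hqinv in
lemma Qi_surj {x : ℤ} (hx : x ∈ Qset p r qinv) : ∃ i < r, Qi p r qinv i = x := by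
  have hmem : x ∈ (Qset p r qinv).sort (· ≤ ·) := (Finset.mem_sort _).mpr hx
  obtain ⟨i, hi, hx'⟩ := List.mem_iff_getElem.mp hmem
  refine ⟨i, by rwa [length_sortQ hq0 hqp hrp hqinv] at hi, ?_⟩
  rw [Qi, List.getD_eq_getElem _ _ hi, hx']

include hq0 hqp hr1 hrp hqinv in
lemma Qi_zero : Qi p r qinv 0 = 0 := by
  have hp : (0:ℤ) < (p:ℤ) := hp0 hq0 hqp
  have h0 : (0:ℤ) ∈ Qset p r qinv := by
    rw [mem_Qset_iff hq0 hqp hrp hqinv]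
    refine ⟨le_refl _, hp, ?_⟩
    simp [lab]
    exact_mod_cast Nat.lt_of_lt_of_le Nat.zero_lt_one hr1.le
  obtain ⟨i, hi, hix⟩ := Qi_surj hq0 hqp hrp hqinv h0
  rcases Nat.eq_zero_or_pos i with rfl | hpos
  · exact hix
  · exfalso
    have := Qi_strictMono hq0 hqp hrp hqinv hpos hi
    rw [hix] at this
    have h1 : Qi p r qinv 0 ∈ Qset p r qinv := Qi_mem hq0 hqp hrp hqinv (by omega)
    rw [mem_Qset_iff hq0 hqp hrp hqinv] at h1
    omega

include hq0 hqp hr1 hrp hqinv in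
lemma Qi_one_min {x : ℤ} (hx : x ∈ Qset p r qinv) (hx0 : 0 < x) :
    Qi p r qinv 1 ≤ x := by
  obtain ⟨i, hi, rfl⟩ := Qi_surj hq0 hqp hrp hqinv hx
  rcases Nat.lt_or_ge i 1 with h | h
  · interval_cases i
    rw [Qi_zero hq0 hqp hr1 hrp hqinv] at hx0; omega
  · rcases Nat.eq_or_lt_of_le h with rfl | h
    · exact le_refl _
    · exact (Qi_strictMono hq0 hqp hrp hqinv h hi).le


include hq0 hqp hrp hqinv in
lemma lab_Qp' : lab p q (Qp' p r qinv) = r := by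
  rw [Qp', lab_res hq0 hqp hqinv]
  exact Int.emod_eq_of_lt (by positivity) (by exact_mod_cast hrp)

include hq0 hqp hrp hqinv in
lemma Qp'_not_mem : Qp' p r qinv ∉ Qset p r qinv := by
  intro h
  rw [mem_Qset_iff hq0 hqp hrp hqinv, lab_Qp' hq0 hqp hrp hqinv] at h
  exact absurd h.2.2 (lt_irrefl _)

include hq0 hqp hr1 hrp hqinv in
lemma Qp'_bounds : 0 < Qp' p r qinv ∧ Qp' p r qinv < p := by
  have hp : (0:ℤ) < (p:ℤ) := hp0 hq0 hqp
  have h0 : 0 ≤ Qp' p r qinv := res_nonneg hp _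
  have h1 : Qp' p r qinv < p := res_lt hp _
  refine ⟨?_, h1⟩
  rcases h0.lt_or_eq with h | h
  · exact h
  · exfalso
    have := lab_Qp' (r := r) hq0 hqp hrp hqinv
    rw [← h] at this
    simp [lab, Int.zero_emod] at this
    omega

include hq0 hqp hr1 hrp hqinv in
lemma mIdx_spec (hm0 : 0 < mIdx p r qinv) (hmr : mIdx p r qinv < r - 1) :
    Qi p r qinv (mIdx p r qinv) < Qp' p r qinv ∧
      Qp' p r qinv < Qi p r qinv (mIdx p r qinv + 1) := by
  have hp : (0:ℤ) < (p:ℤ) := hp0 hq0 hqp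
  set Q' := Qp' p r qinv with hQ'
  set F := (Qset p r qinv).filter (fun x => x < Q') with hF
  set c := F.card with hc
  have hcr : c ≤ r := by
    rw [hc, ← card_Qset (p := p) (qinv := qinv) hq0 hqp hrp hqinv]
    exact Finset.card_le_card (Finset.filter_subset _ _)
  have hm : mIdx p r qinv = c - 1 := rfl
  have hQne : ∀ i < r, Qi p r qinv i ≠ Q' := by
    intro i hi h
    have hh := Qi_mem hq0 hqp hrp hqinv hi
    rw [h] at hh
    exact Qp'_not_mem hq0 hqp hrp hqinv hh
  -- Claim A : if c < r then Q' < Qi c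
  have claimA : ∀ {cc : ℕ}, cc = c → cc < r → Q' < Qi p r qinv cc := by
    intro cc hcc hcltr
    by_contra hcon
    push_neg at hcon
    have hlt : Qi p r qinv cc < Q' := lt_of_le_of_ne hcon (hQne _ hcltr)
    have hsub : (Finset.range (cc + 1)).image (Qi p r qinv) ⊆ F := by
      intro x hx
      obtain ⟨i, hi, rfl⟩ := Finset.mem_image.mp hx
      have hi' : i ≤ cc := by
        have := Finset.mem_range.mp hi
        omega
      have hix : Qi p r qinv i ≤ Qi p r qinv cc := by
        rcases hi'.lt_or_eq with h | h
        · exact (Qi_strictMono hq0 hqp hrp hqinv h hcltr).le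
        · rw [h]
      refine Finset.mem_filter.mpr ⟨Qi_mem hq0 hqp hrp hqinv (by omega), lt_of_le_of_lt hix hlt⟩
    have hcard : ((Finset.range (cc + 1)).image (Qi p r qinv)).card = cc + 1 := by
      rw [Finset.card_image_of_injOn, Finset.card_range]
      intro a ha b hb hab
      simp only [Finset.coe_range, Set.mem_Iio] at ha hb
      by_contra hne
      rcases Nat.lt_or_ge a b with h | h
      · exact absurd hab (ne_of_lt (Qi_strictMono hq0 hqp hrp hqinv h (by omega)))
      · have : b < a := by omega
        exact absurd hab.symm (ne_of_lt (Qi_strictMono hq0 hqp hrp hqinv this (by omega)))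
    have := Finset.card_le_card hsub
    rw [hcard] at this
    omega
  -- Claim B : if 1 ≤ c then Qi (c-1) < Q'
  have claimB : 1 ≤ c → Qi p r qinv (c - 1) < Q' := by
    intro h1c
    have hcm1 : c - 1 < r := by omega
    by_contra hcon
    push_neg at hcon
    have hlt : Q' < Qi p r qinv (c - 1) := lt_of_le_of_ne hcon (fun h => hQne _ hcm1 h.symm)
    have hsub : F ⊆ (Finset.range (c - 1)).image (Qi p r qinv) := by
      intro x hx
      obtain ⟨hxQ, hxlt⟩ := Finset.mem_filter.mp hx
      obtain ⟨i, hi, rfl⟩ := Qi_surj hq0 hqp hrp hqinv hxQ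
      refine Finset.mem_image.mpr ⟨i, Finset.mem_range.mpr ?_, rfl⟩
      by_contra hige
      push_neg at hige
      have : Qi p r qinv (c - 1) ≤ Qi p r qinv i := by
        rcases Nat.lt_or_ge (c-1) i with h | h
        · exact (Qi_strictMono hq0 hqp hrp hqinv h hi).le
        · have : i = c - 1 := by omega
          rw [this]
      omega
    have := Finset.card_le_card hsub
    have h2 := Finset.card_image_le (s := Finset.range (c-1)) (f := Qi p r qinv)
    rw [Finset.card_range] at h2
    omega
  have hc2 : 2 ≤ c := by
    have h1 : 0 < c - 1 := by rw [← hm]; exact hm0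
    omega
  have hcltr : c < r := by omega
  constructor
  · have := claimB (by omega)
    rwa [hm]
  · have h1 : mIdx p r qinv + 1 = c := by omega
    rw [h1]
    exact claimA rfl hcltr


include hq0 hqp in
lemma ediv_step (a : ℤ) : (a + q) / p = a / p + (if (p:ℤ) ≤ a % p + q then 1 else 0) := by
  have hp : (0:ℤ) < (p:ℤ) := hp0 hq0 hqp
  have hq' : (0:ℤ) < (q:ℤ) := by exact_mod_cast hq0
  have hqp' : (q:ℤ) < (p:ℤ) := by exact_mod_cast hqp
  have hmod0 : 0 ≤ a % p := Int.emod_nonneg _ (ne_of_gt hp)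
  have hmodp : a % p < p := Int.emod_lt_of_pos _ hp
  conv_lhs => rw [← Int.mul_ediv_add_emod a p]
  have h1 : (p:ℤ) * (a / p) + a % p + q = a % p + q + p * (a / p) := by ring
  rw [h1, Int.add_mul_ediv_left _ _ (ne_of_gt hp)]
  split_ifs with h
  · have h2 : a % p + q = (a % p + q - p) + p * 1 := by ring
    rw [h2, Int.add_mul_ediv_left _ _ (ne_of_gt hp), Int.ediv_eq_zero_of_lt (by omega) (by omega)]
    ring
  · rw [Int.ediv_eq_zero_of_lt (by omega) (by omega)]
    ring

include hq0 hqp hqinv in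
lemma count_lt (x : ℕ) (hx : x ≤ p) :
    (((Rset p q qinv).filter (fun l => l < (x:ℤ))).card : ℤ) = ((x:ℤ) * q) / p := by
  have hp : (0:ℤ) < (p:ℤ) := hp0 hq0 hqp
  induction x with
  | zero =>
    rw [Finset.filter_false_of_mem, Finset.card_empty]
    · simp
    · intro l hl
      have := (mem_Rset_iff hq0 hqp hqinv l).mp hl
      push_cast
      omega
  | succ x ih =>
    have hx' : x < p := hx
    have ihx := ih (le_of_lt hx')
    have hsplit : ((Rset p q qinv).filter (fun l => l < ((x:ℤ) + 1))).card
        = ((Rset p q qinv).filter (fun l => l < (x:ℤ))).card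
          + ((Rset p q qinv).filter (fun l => l = (x:ℤ))).card := by
      rw [← Finset.card_union_of_disjoint]
      · congr 1
        ext l
        simp only [Finset.mem_union, Finset.mem_filter]
        constructor
        · rintro ⟨hl, h⟩
          rcases lt_or_eq_of_le (Int.lt_add_one_iff.mp h) with h' | h'
          · exact Or.inl ⟨hl, h'⟩
          · exact Or.inr ⟨hl, h'⟩
        · rintro (⟨hl, h⟩ | ⟨hl, h⟩)
          · exact ⟨hl, by omega⟩
          · exact ⟨hl, by omega⟩
      · rw [Finset.disjoint_filter]
        intro l _ h h'
        omega
    have hstep := ediv_step hq0 hqp ((x:ℤ) * q)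
    have hx1 : ((x:ℕ)+1 : ℤ) * q = (x:ℤ) * q + q := by push_cast; ring
    push_cast
    rw [hsplit]
    push_cast
    rw [ihx]
    have : ((x:ℤ) + 1) * q = (x:ℤ) * q + q := by ring
    rw [this, hstep]
    congr 1
    by_cases hcase : (p:ℤ) ≤ ((x:ℤ) * q) % p + q
    · rw [if_pos hcase]
      have hmem : (x:ℤ) ∈ Rset p q qinv := by
        rw [mem_Rset_iff hq0 hqp hqinv]
        exact ⟨by positivity, by exact_mod_cast hx', by simp only [lab]; omega⟩
      rw [Finset.filter_eq']
      rw [if_pos hmem]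
      simp
    · rw [if_neg hcase]
      have hmem : (x:ℤ) ∉ Rset p q qinv := by
        rw [mem_Rset_iff hq0 hqp hqinv]
        push_neg
        intro _ _
        simp only [lab]; omega
      rw [Finset.filter_eq']
      rw [if_neg hmem]
      simp


include hq0 hqp hr1 hrp hqinv in
lemma kbar_eq_count {i : ℕ} (hi1 : 1 ≤ i) (hir : i ≤ r - 1) :
    kbar p q r qinv i = ((Rset p q qinv).filter (fun l => l < Qi p r qinv i)).card := by
  induction i with
  | zero => omega
  | succ i ih =>
    rcases Nat.eq_zero_or_pos i with rfl | hipos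
    · -- kbar 1 = ki 1
      rw [kbar]
      have : Finset.Icc 1 1 = {1} := rfl
      rw [this, Finset.sum_singleton, ki]
      rw [if_neg (by omega)]
      congr 1
      apply Finset.filter_congr
      intro l hl
      have hm := (mem_Rset_iff hq0 hqp hqinv l).mp hl
      rw [Qi_zero hq0 hqp hr1 hrp hqinv]
      constructor
      · rintro ⟨_, h⟩; exact h
      · intro h; exact ⟨hm.1, h⟩
    · have hstep : kbar p q r qinv (i+1) = kbar p q r qinv i + ki p q r qinv (i+1) := by
        rw [kbar, kbar, ← Finset.sum_Icc_succ_top (by omega)]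
      rw [hstep, ih hipos (by omega)]
      have hki : ki p q r qinv (i+1)
          = ((Rset p q qinv).filter
              (fun l => Qi p r qinv i ≤ l ∧ l < Qi p r qinv (i+1))).card := by
        rw [ki, if_neg (by omega)]
        simp only [Nat.add_sub_cancel]
      rw [hki]
      have hmono : Qi p r qinv i < Qi p r qinv (i+1) :=
        Qi_strictMono hq0 hqp hrp hqinv (by omega) (by omega)
      rw [← Finset.card_filter_add_card_filter_not
            (s := (Rset p q qinv).filter (fun l => l < Qi p r qinv (i+1)))
            (p := fun l => l < Qi p r qinv i)]
      · congr 1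
        · congr 1
          rw [Finset.filter_filter]
          apply Finset.filter_congr
          intro l _
          constructor
          · intro h; exact ⟨h.trans hmono, h⟩
          · intro h; exact h.2
        · congr 1
          rw [Finset.filter_filter]
          apply Finset.filter_congr
          intro l _
          simp only [not_lt]
          constructor
          · rintro ⟨h1, h2⟩; exact ⟨h2, h1⟩
          · rintro ⟨h1, h2⟩; exact ⟨h2, h1⟩

include hq0 hqp hr1 hrp hqinv in
lemma key_identity {i : ℕ} (hi1 : 1 ≤ i) (hir : i ≤ r - 1) :
    Qi p r qinv i * q - (kbar p q r qinv i : ℤ) * p = lab p q (Qi p r qinv i) := by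
  have hp : (0:ℤ) < (p:ℤ) := hp0 hq0 hqp
  have hmem := Qi_mem hq0 hqp hrp hqinv (show i < r by omega)
  rw [mem_Qset_iff hq0 hqp hrp hqinv] at hmem
  obtain ⟨h0, h1, _⟩ := hmem
  have hcount := count_lt hq0 hqp hqinv (Qi p r qinv i).toNat
    (by omega)
  rw [Int.toNat_of_nonneg h0] at hcount
  have hkb : (kbar p q r qinv i : ℤ) = Qi p r qinv i * q / p := by
    rw [kbar_eq_count hq0 hqp hr1 hrp hqinv hi1 hir]
    exact hcount
  rw [hkb, lab]
  have := Int.mul_ediv_add_emod (Qi p r qinv i * q) p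
  linarith


include hq0 hqp in
lemma lab_eq_of {x v : ℤ} (h : x * q ≡ v [ZMOD (p:ℕ)]) (h0 : 0 ≤ v) (h1 : v < p) :
    lab p q x = v := by
  have := (Int.ModEq.symm h)
  rw [lab, h, Int.emod_eq_of_lt h0 h1]

lemma lab_modeq (x : ℤ) : x * q ≡ lab p q x [ZMOD (p:ℕ)] :=
  (Int.emod_emod_of_dvd _ dvd_rfl).symm

include hq0 hqp hqinv in
lemma lab_inj {x y : ℤ} (hx0 : 0 ≤ x) (hx1 : x < p) (hy0 : 0 ≤ y) (hy1 : y < p)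
    (h : lab p q x = lab p q y) : x = y := by
  have h1 := res_lab hq0 hqp hqinv x hx0 hx1
  have h2 := res_lab hq0 hqp hqinv y hy0 hy1
  rw [h] at h1
  rw [h2] at h1
  exact h1.symm

include hq0 hqp hr1 hrp hqinv in
lemma main_label_lt (hm0 : 0 < mIdx p r qinv) (hmr : mIdx p r qinv < r - 1) :
    lab p q (Qi p r qinv (mIdx p r qinv + 1)) < lab p q (Qi p r qinv 1) := by
  have hp : (0:ℤ) < (p:ℤ) := hp0 hq0 hqp
  obtain ⟨hQmQ', hQ'Qm1⟩ := mIdx_spec hq0 hqp hr1 hrp hqinv hm0 hmr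
  set m := mIdx p r qinv with hmdef
  have hm1r : m + 1 < r := by omega
  have hmr' : m < r := by omega
  have h1r : 1 < r := hr1
  -- memberships and bounds
  have hQm := (mem_Qset_iff hq0 hqp hrp hqinv _).mp (Qi_mem hq0 hqp hrp hqinv hmr')
  have hQm1 := (mem_Qset_iff hq0 hqp hrp hqinv _).mp (Qi_mem hq0 hqp hrp hqinv hm1r)
  have hQ1 := (mem_Qset_iff hq0 hqp hrp hqinv _).mp (Qi_mem hq0 hqp hrp hqinv h1r)
  have hQ1pos : 0 < Qi p r qinv 1 := by
    have := Qi_strictMono hq0 hqp hrp hqinv (show 0 < 1 by omega) h1r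
    rw [Qi_zero hq0 hqp hr1 hrp hqinv] at this
    exact this
  have hQmpos : 0 < Qi p r qinv m := by
    have := Qi_strictMono hq0 hqp hrp hqinv hm0 hmr'
    rw [Qi_zero hq0 hqp hr1 hrp hqinv] at this
    exact this
  have hQ'b := Qp'_bounds hq0 hqp hr1 hrp hqinv
  set nm := lab p q (Qi p r qinv m) with hnm
  set a := lab p q (Qi p r qinv 1) with ha
  set j := lab p q (Qi p r qinv (m+1)) with hj
  have hnm0 : 0 ≤ nm := lab_nonneg hp _
  have ha0 : 0 ≤ a := lab_nonneg hp _
  have hj0 : 0 ≤ j := lab_nonneg hp _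
  have hnmr : nm < r := hQm.2.2
  have har : a < r := hQ1.2.2
  have hjr : j < r := hQm1.2.2
  have hrp' : (r:ℤ) < (p:ℤ) := by exact_mod_cast hrp
  -- nm ≥ 1
  have hnm1 : 1 ≤ nm := by
    rcases hnm0.lt_or_eq with h | h
    · omega
    · exfalso
      have h0 : lab p q (Qi p r qinv m) = lab p q 0 := by
        rw [← hnm, ← h]; simp [lab]
      have := lab_inj hq0 hqp hqinv hQm.1 hQm.2.1 le_rfl hp h0
      omega
  -- F1 : Qi 1 ≤ Q' - Qi m
  have hQ'lab : Qp' p r qinv * q ≡ (r:ℤ) [ZMOD (p:ℕ)] := by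
    have := lab_Qp' (r := r) hq0 hqp hrp hqinv
    have h2 := lab_modeq (p := p) (q := q) (Qp' p r qinv)
    rw [this] at h2
    exact h2
  have hF1 : Qi p r qinv 1 ≤ Qp' p r qinv - Qi p r qinv m := by
    set u := Qp' p r qinv - Qi p r qinv m with hu
    have hu0 : 0 < u := by omega
    have hup : u < p := by omega
    have hulab : lab p q u = (r:ℤ) - nm := by
      apply lab_eq_of hq0 hqp
      · have h1 : u * q = Qp' p r qinv * q - Qi p r qinv m * q := by rw [hu]; ring
        rw [h1]
        exact Int.ModEq.sub hQ'lab (lab_modeq _)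
      · omega
      · omega
    have humem : u ∈ Qset p r qinv := by
      rw [mem_Qset_iff hq0 hqp hrp hqinv]
      exact ⟨hu0.le, hup, by rw [hulab]; omega⟩
    exact Qi_one_min hq0 hqp hr1 hrp hqinv humem hu0
  -- main contradiction argument
  by_contra hcon
  push_neg at hcon  -- a ≤ j
  have hane : a ≠ j := by
    intro h
    have := lab_inj hq0 hqp hqinv hQ1.1 hQ1.2.1 hQm1.1 hQm1.2.1 (by rw [← ha, ← hj, h])
    have hlt := Qi_strictMono hq0 hqp hrp hqinv (show 1 < m + 1 by omega) hm1r
    omega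
  have haj : a < j := by omega
  set y := Qi p r qinv (m+1) - Qi p r qinv 1 with hy
  have hy0 : 0 < y := by
    have := Qi_strictMono hq0 hqp hrp hqinv (show 1 < m + 1 by omega) hm1r
    omega
  have hyp : y < p := by omega
  have hylab : lab p q y = j - a := by
    apply lab_eq_of hq0 hqp
    · have h1 : y * q = Qi p r qinv (m+1) * q - Qi p r qinv 1 * q := by rw [hy]; ring
      rw [h1]
      exact Int.ModEq.sub (lab_modeq _) (lab_modeq _)
    · omega
    · omega
  have hymem : y ∈ Qset p r qinv := by
    rw [mem_Qset_iff hq0 hqp hrp hqinv]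
    exact ⟨hy0.le, hyp, by rw [hylab]; omega⟩
  have hybetween : Qi p r qinv m < y ∧ y < Qi p r qinv (m+1) := by
    constructor
    · omega
    · omega
  obtain ⟨t, htr, hty⟩ := Qi_surj hq0 hqp hrp hqinv hymem
  rcases Nat.lt_or_ge t (m+1) with h | h
  · rcases Nat.lt_or_ge t m with h' | h'
    · have := Qi_strictMono hq0 hqp hrp hqinv h' hmr'
      omega
    · have htm : t = m := by omega
      rw [htm] at hty
      omega
  · rcases Nat.eq_or_lt_of_le h with h' | h'
    · rw [← h'] at hty
      omega
    · have := Qi_strictMono hq0 hqp hrp hqinv h' htr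
      omega

end Proof


theorem stmt18 (p q r : ℕ) (qinv : ℤ) (hcop : Nat.Coprime p q)
    (hq0 : 0 < q) (hqp : q < p) (hr1 : 1 < r) (hrp : r < p)
    (hqinv : ((q : ℤ) * qinv) % (p : ℤ) = 1)
    (hm0 : 0 < mIdx p r qinv) (hmr : mIdx p r qinv < r - 1) :
    Qi p r qinv 1 * (q : ℤ) - (kbar p q r qinv 1 : ℤ) * (p : ℤ) >
      Qi p r qinv (mIdx p r qinv + 1) * (q : ℤ) -
        (kbar p q r qinv (mIdx p r qinv + 1) : ℤ) * (p : ℤ) := by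
  have hid1 := key_identity hq0 hqp hr1 hrp hqinv (i := 1) le_rfl (by omega)
  have hid2 := key_identity hq0 hqp hr1 hrp hqinv (i := mIdx p r qinv + 1) (by omega) (by omega)
  rw [hid1, hid2]
  exact main_label_lt hq0 hqp hr1 hrp hqinv hm0 hmr
end
end
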